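/- arXiv:0710.1459 — 11 statements merged into one kernel-verified Lean document; each statement's English description precedes it below -/
import Mathlib

section
/- Suppose a ∼_φ b. Then for every natural number n, the sets 𝒜_n and ℬ_n are finite and have the same cardinality. -/
/-!
Dividing each multiplicity `m_i(λ)` by `a_i` with remainder writes every partition uniquely as
a partition in `𝒜` plus a finite multiset of *blocks*, a block at `i ∈ supp(a)` consisting of
`a_i` parts equal to `i`, so of size `i·a_i`. In generating functions, `P = G_𝒜 · B_a`, where
`P` and `G_𝒜` count all partitions and those in `𝒜` by size, and `B_a` counts multisets of blocks
by size. The bijection `φ` matches the blocks of `a` with those of `b` preserving sizes, so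
`B_a = B_b`, and cancelling this nonzero series in the domain `ℤ⟦X⟧` gives `G_𝒜 = G_ℬ`.
-/

open scoped BigOperators

/-- The size `|λ| = Σ_i i·m_i(λ)` of a partition, identified with its
multiplicity function (a finitely supported function `ℕ+ →₀ ℕ`). -/
def psize (lam : ℕ+ →₀ ℕ) : ℕ := lam.sum fun i m => (i : ℕ) * m

/-- `λ ∈ 𝒜`: every multiplicity satisfies `m_i(λ) < a_i`
(automatic when `a_i = ∞`). -/
def InA (a : ℕ+ → ℕ∞) (lam : ℕ+ →₀ ℕ) : Prop := ∀ i, (lam i : ℕ∞) < a i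

/-- `a ∼_φ b` : the sequences `a, b` take values in `{1,2,…} ∪ {∞}`,
`φ` is a bijection from `supp(a) = {i : a_i < ∞}` onto `supp(b) = {j : b_j < ∞}`,
and `i·a_i = φ(i)·b_{φ(i)}` for all `i ∈ supp(a)`. -/
def PhiEquiv (a b : ℕ+ → ℕ∞) (phi : ℕ+ → ℕ+) : Prop :=
  (∀ i, a i ≠ 0) ∧ (∀ i, b i ≠ 0) ∧
  Set.BijOn phi {i | a i ≠ ⊤} {j | b j ≠ ⊤} ∧
  (∀ i, a i ≠ ⊤ → ((i : ℕ) : ℕ∞) * a i = ((phi i : ℕ) : ℕ∞) * b (phi i))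

open PowerSeries Finset.HasAntidiagonal

section WeightSeries

variable {α β : Type*}

noncomputable def weightSeries (w : α → ℕ) : ℤ⟦X⟧ :=
  PowerSeries.mk fun n => (Nat.card {x // w x = n} : ℤ)

@[simp]
lemma coeff_weightSeries (w : α → ℕ) (n : ℕ) :
    coeff n (weightSeries w) = Nat.card {x // w x = n} :=
  coeff_mk _ _

lemma weightSeries_congr {wα : α → ℕ} {wβ : β → ℕ} (e : α ≃ β) (he : ∀ x, wβ (e x) = wα x) :
    weightSeries wα = weightSeries wβ := by
  ext n
  simp only [coeff_weightSeries]
  exact congrArg _ (Nat.card_congr (e.subtypeEquiv fun x => by rw [he]))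

def fiberProdEquiv (wα : α → ℕ) (wβ : β → ℕ) (n : ℕ) :
    {p : α × β // wα p.1 + wβ p.2 = n} ≃
      Σ k : antidiagonal n, {x // wα x = k.1.1} × {y // wβ y = k.1.2} where
  toFun p := ⟨⟨(wα p.1.1, wβ p.1.2), mem_antidiagonal.mpr p.2⟩, ⟨p.1.1, rfl⟩, ⟨p.1.2, rfl⟩⟩
  invFun k := ⟨(k.2.1, k.2.2), by rw [k.2.1.2, k.2.2.2]; exact mem_antidiagonal.mp k.1.2⟩
  left_inv _ := rfl
  right_inv := by
    rintro ⟨⟨⟨i, j⟩, hk⟩, ⟨x, hx⟩, ⟨y, hy⟩⟩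
    dsimp only at hx hy
    subst hx hy
    rfl

lemma weightSeries_prod {wα : α → ℕ} {wβ : β → ℕ} (hα : ∀ n, Finite {x // wα x = n})
    (hβ : ∀ n, Finite {y // wβ y = n}) :
    weightSeries (fun p : α × β => wα p.1 + wβ p.2) = weightSeries wα * weightSeries wβ := by
  ext n
  rw [coeff_mul, coeff_weightSeries, Nat.card_congr (fiberProdEquiv wα wβ n), Nat.card_sigma,
    ← Finset.sum_coe_sort (antidiagonal n)]
  simp [Nat.card_prod]

end WeightSeries

section Partitions

lemma psize_add (f g : ℕ+ →₀ ℕ) : psize (f + g) = psize f + psize g :=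
  Finsupp.sum_add_index' (fun _ => mul_zero _) (fun _ _ _ => mul_add _ _ _)

lemma mul_apply_le_psize (lam : ℕ+ →₀ ℕ) (i : ℕ+) : (i : ℕ) * lam i ≤ psize lam := by
  by_cases hi : i ∈ lam.support
  · exact Finset.single_le_sum (f := fun j : ℕ+ => (j : ℕ) * lam j) (fun _ _ => Nat.zero_le _) hi
  · simp [Finsupp.notMem_support_iff.mp hi]

lemma finite_setOf_psize_eq (n : ℕ) : {lam : ℕ+ →₀ ℕ | psize lam = n}.Finite := by
  classical
  refine (Set.finite_Iic
    (Finsupp.indicator ((Finset.range (n + 1)).preimage PNat.val PNat.coe_injective.injOn)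
      fun _ _ => n)).subset ?_
  rintro lam rfl i
  have hi := mul_apply_le_psize lam i
  rw [Finsupp.indicator_apply]
  split_ifs with h
  · exact (Nat.le_mul_of_pos_left _ (PNat.pos i)).trans hi
  · rw [Finset.mem_preimage, Finset.mem_range, not_lt] at h
    nlinarith

lemma finite_setOf_inA_psize_eq (a : ℕ+ → ℕ∞) (n : ℕ) :
    {lam : ℕ+ →₀ ℕ | InA a lam ∧ psize lam = n}.Finite :=
  (finite_setOf_psize_eq n).subset fun _ h => h.2

lemma weightSeries_psize_ne_zero : weightSeries psize ≠ 0 := by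
  have : Nonempty {lam // psize lam = 0} := ⟨⟨0, Finsupp.sum_zero_index⟩⟩
  have : Finite {lam // psize lam = 0} := (finite_setOf_psize_eq 0).to_subtype
  refine fun h => (Nat.card_pos (α := {lam : ℕ+ →₀ ℕ // psize lam = 0})).ne' ?_
  simpa using congrArg (coeff 0) h

end Partitions

section Decomposition

variable (a : ℕ+ → ℕ∞)

/- `(a i).toNat` is `0` at `a i = ⊤`, and `m % 0 = m`, `m / 0 = 0`: a part with unbounded
multiplicity lies entirely in the remainder `remPart`. -/

noncomputable def remPart (lam : ℕ+ →₀ ℕ) : ℕ+ →₀ ℕ :=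
  Finsupp.onFinset lam.support (fun i => lam i % (a i).toNat) fun i h =>
    Finsupp.mem_support_iff.mpr fun h0 => h (by rw [h0, Nat.zero_mod])

noncomputable def quotPart (lam : ℕ+ →₀ ℕ) : {i // a i ≠ ⊤} →₀ ℕ :=
  Finsupp.onFinset (lam.support.subtype _) (fun i => lam i / (a i).toNat) fun i h =>
    Finset.mem_subtype.mpr <| Finsupp.mem_support_iff.mpr fun h0 => h (by rw [h0, Nat.zero_div])

noncomputable def blocks (q : {i // a i ≠ ⊤} →₀ ℕ) : ℕ+ →₀ ℕ :=
  Finsupp.onFinset q.extendDomain.support (fun i => (a i).toNat * q.extendDomain i) fun i h =>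
    Finsupp.mem_support_iff.mpr fun h0 => h (by rw [h0, mul_zero])

def blockSize (q : {i // a i ≠ ⊤} →₀ ℕ) : ℕ :=
  q.sum fun i m => (i : ℕ) * ((a i).toNat * m)

@[simp]
lemma remPart_apply (lam : ℕ+ →₀ ℕ) (i : ℕ+) : remPart a lam i = lam i % (a i).toNat := rfl

@[simp]
lemma quotPart_apply (lam : ℕ+ →₀ ℕ) (i : {i // a i ≠ ⊤}) :
    quotPart a lam i = lam i / (a i).toNat := rfl

lemma blocks_apply_of_ne_top (q : {i // a i ≠ ⊤} →₀ ℕ) {i : ℕ+} (hi : a i ≠ ⊤) :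
    blocks a q i = (a i).toNat * q ⟨i, hi⟩ := by
  simp [blocks, hi]

lemma blocks_apply_of_eq_top (q : {i // a i ≠ ⊤} →₀ ℕ) {i : ℕ+} (hi : a i = ⊤) :
    blocks a q i = 0 := by
  simp [blocks, hi]

lemma psize_blocks (q : {i // a i ≠ ⊤} →₀ ℕ) : psize (blocks a q) = blockSize a q := by
  rw [psize, blocks, Finsupp.onFinset_sum _ fun _ => mul_zero _]
  change q.extendDomain.sum (fun i m => (i : ℕ) * ((a i).toNat * m)) = _
  rw [Finsupp.extendDomain_eq_embDomain_subtype, Finsupp.sum_embDomain]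
  rfl

variable {a}

lemma InA.lt_toNat {μ : ℕ+ →₀ ℕ} (hμ : InA a μ) {i : ℕ+} (ht : a i ≠ ⊤) :
    μ i < (a i).toNat := by
  rw [← Nat.cast_lt (α := ℕ∞), ENat.natCast_toNat ht]
  exact hμ i

lemma inA_remPart (ha : ∀ i, a i ≠ 0) (lam : ℕ+ →₀ ℕ) : InA a (remPart a lam) := by
  intro i
  by_cases ht : a i = ⊤
  · rw [ht]
    exact ENat.natCast_lt_top _
  · rw [← ENat.natCast_toNat ht, Nat.cast_lt, remPart_apply]
    exact Nat.mod_lt _ (ENat.toNat_pos (ha i) ht)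

lemma remPart_add_blocks_quotPart (lam : ℕ+ →₀ ℕ) :
    remPart a lam + blocks a (quotPart a lam) = lam := by
  ext i
  by_cases ht : a i = ⊤
  · simp [blocks_apply_of_eq_top _ _ ht, ht]
  · simp [blocks_apply_of_ne_top _ _ ht, Nat.mod_add_div]

lemma remPart_add_blocks {μ : ℕ+ →₀ ℕ} (hμ : InA a μ) (q : {i // a i ≠ ⊤} →₀ ℕ) :
    remPart a (μ + blocks a q) = μ := by
  ext i
  by_cases ht : a i = ⊤
  · simp [blocks_apply_of_eq_top _ _ ht, ht]
  · simp [blocks_apply_of_ne_top _ _ ht, Nat.mod_eq_of_lt (hμ.lt_toNat ht)]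

lemma quotPart_add_blocks (ha : ∀ i, a i ≠ 0) {μ : ℕ+ →₀ ℕ} (hμ : InA a μ)
    (q : {i // a i ≠ ⊤} →₀ ℕ) : quotPart a (μ + blocks a q) = q := by
  ext ⟨i, ht⟩
  rw [quotPart_apply, Finsupp.add_apply, blocks_apply_of_ne_top _ _ ht,
    Nat.add_mul_div_left _ _ (ENat.toNat_pos (ha i) ht), Nat.div_eq_of_lt (hμ.lt_toNat ht),
    zero_add]

noncomputable def decomposition (ha : ∀ i, a i ≠ 0) :
    (ℕ+ →₀ ℕ) ≃ {μ // InA a μ} × ({i // a i ≠ ⊤} →₀ ℕ) where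
  toFun lam := (⟨remPart a lam, inA_remPart ha lam⟩, quotPart a lam)
  invFun p := p.1.1 + blocks a p.2
  left_inv := remPart_add_blocks_quotPart
  right_inv p := Prod.ext (Subtype.ext (remPart_add_blocks p.1.2 p.2))
    (quotPart_add_blocks ha p.1.2 p.2)

lemma psize_decomposition_symm (ha : ∀ i, a i ≠ 0) (p : {μ // InA a μ} × ({i // a i ≠ ⊤} →₀ ℕ)) :
    psize ((decomposition ha).symm p) = psize p.1.1 + blockSize a p.2 := by
  rw [← psize_blocks]
  exact psize_add _ _

lemma finite_psize_fiber_inA (n : ℕ) : Finite {μ : {μ // InA a μ} // psize μ.1 = n} :=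
  have : Finite {lam // InA a lam ∧ psize lam = n} := (finite_setOf_inA_psize_eq a n).to_subtype
  Finite.of_equiv _ (Equiv.subtypeSubtypeEquivSubtypeInter (InA a) (psize · = n)).symm

lemma finite_blockSize_fiber (ha : ∀ i, a i ≠ 0) (n : ℕ) :
    Finite {q : {i // a i ≠ ⊤} →₀ ℕ // blockSize a q = n} := by
  have : Finite {lam : ℕ+ →₀ ℕ // psize lam = n} := (finite_setOf_psize_eq n).to_subtype
  let zero : {μ // InA a μ} := ⟨0, fun i => pos_iff_ne_zero.mpr (ha i)⟩
  refine Finite.of_injective (β := {lam : ℕ+ →₀ ℕ // psize lam = n})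
    (fun q => ⟨(decomposition ha).symm (zero, q.1), ?_⟩) fun q r h => ?_
  · rw [psize_decomposition_symm, q.2]
    exact zero_add _
  · exact Subtype.ext (congrArg Prod.snd ((decomposition ha).symm.injective
      (congrArg Subtype.val h)))

lemma weightSeries_psize_eq_mul (ha : ∀ i, a i ≠ 0) :
    weightSeries psize =
      weightSeries (fun μ : {μ // InA a μ} => psize μ.1) * weightSeries (blockSize a) := by
  rw [← weightSeries_prod finite_psize_fiber_inA (finite_blockSize_fiber ha)]
  exact (weightSeries_congr (decomposition ha).symm (psize_decomposition_symm ha)).symm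

end Decomposition

lemma weightSeries_blockSize_eq {a b : ℕ+ → ℕ∞} {phi : ℕ+ → ℕ+}
    (hbij : Set.BijOn phi {i | a i ≠ ⊤} {j | b j ≠ ⊤})
    (hw : ∀ i, a i ≠ ⊤ → ((i : ℕ) : ℕ∞) * a i = ((phi i : ℕ) : ℕ∞) * b (phi i)) :
    weightSeries (blockSize a) = weightSeries (blockSize b) := by
  refine weightSeries_congr (Finsupp.equivCongrLeft (hbij.equiv phi)) fun q => ?_
  rw [blockSize, Finsupp.equivCongrLeft_apply, Finsupp.sum_equivMapDomain, blockSize]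
  refine Finsupp.sum_congr fun i _ => ?_
  have h := congrArg ENat.toNat (hw i i.2)
  simp only [ENat.toNat_mul, ENat.toNat_natCast] at h
  change (phi i : ℕ) * ((b (phi i)).toNat * _) = _
  rw [← mul_assoc, ← h, mul_assoc]

/-- if `a ∼_φ b`, then for every `n` the sets `𝒜_n` and `ℬ_n`
are finite and have the same cardinality. -/
theorem ohara_andrews_card (a b : ℕ+ → ℕ∞) (phi : ℕ+ → ℕ+)
    (h : PhiEquiv a b phi) (n : ℕ) :
    {lam : ℕ+ →₀ ℕ | InA a lam ∧ psize lam = n}.Finite ∧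
    {lam : ℕ+ →₀ ℕ | InA b lam ∧ psize lam = n}.Finite ∧
    Nat.card {lam : ℕ+ →₀ ℕ | InA a lam ∧ psize lam = n} =
      Nat.card {lam : ℕ+ →₀ ℕ | InA b lam ∧ psize lam = n} := by
  obtain ⟨ha, hb, hbij, hw⟩ := h
  have hne := weightSeries_psize_ne_zero
  rw [weightSeries_psize_eq_mul ha] at hne
  have hseries : weightSeries (fun μ : {μ // InA a μ} => psize μ.1) =
      weightSeries (fun μ : {μ // InA b μ} => psize μ.1) := by
    refine mul_right_cancel₀ (right_ne_zero_of_mul hne) ?_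
    rw [← weightSeries_psize_eq_mul ha, weightSeries_blockSize_eq hbij hw,
      ← weightSeries_psize_eq_mul hb]
  have hcard := congrArg (coeff n) hseries
  simp only [coeff_weightSeries, Nat.cast_inj] at hcard
  refine ⟨finite_setOf_inA_psize_eq a n, finite_setOf_inA_psize_eq b n, ?_⟩
  rwa [Nat.card_congr (Equiv.subtypeSubtypeEquivSubtypeInter (InA a) (psize · = n)),
    Nat.card_congr (Equiv.subtypeSubtypeEquivSubtypeInter (InA b) (psize · = n))] at hcard
end

section
/- Assume a ∼_φ b and let λ ∈ 𝒜. Then: (i) there is no infinite chain λ = μ⁰ → μ¹ → μ² → ⋯ under O'Hara's step relation; (ii) any two maximal rewrite sequences from λ end at the same partition, denoted ψ(λ); and (iii) ψ(λ) ∈ ℬ and |ψ(λ)| = |λ|. -/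
open scoped BigOperators

/-- One step `μ → μ'` of O'Hara's algorithm: for some `j ∈ supp(b)` with
`m_j(μ) ≥ b_j`, remove `b_j` parts equal to `j` and add `a_i` parts equal to
`i`, where `i = φ⁻¹(j)`. -/
def OStep (a b : ℕ+ → ℕ∞) (phi : ℕ+ → ℕ+) (mu mu' : ℕ+ →₀ ℕ) : Prop :=
  ∃ i j : ℕ+, phi i = j ∧ a i ≠ ⊤ ∧ b j ≠ ⊤ ∧ b j ≤ (mu j : ℕ∞) ∧
    ∀ l, mu' l = mu l + (if l = i then (a i).toNat else 0)
                      - (if l = j then (b j).toNat else 0)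

/-!
Each step preserves the size, because `i·aᵢ = φ(i)·b_{φ(i)}`; so along a chain from `λ`, with
`n = |λ|`, only parts `j ≤ n` are ever removed. Let `xⱼ(t)` be the total size of the parts `j`
removed in the first `t` steps. Parts `j` are added exactly by the steps removing parts `φ(j)`, so
when parts `j` are removed, `xⱼ(t+1) ≤ j·λⱼ + x_{φ(j)}(t) < x_{φ(j)}(t) + φ(j)·b_{φ(j)}`, the last
inequality being `λⱼ < aⱼ`. As `x_{φ(j)}(t)` is a multiple of `φ(j)·b_{φ(j)}`, induction on `t`
gives `xⱼ(t) < L` for any common multiple `L > n` of the numbers `j·aⱼ = φ(j)·b_{φ(j)}`, `j ≤ n`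
(if `aⱼ = ∞`, no parts `j` are ever added and `xⱼ(t) ≤ j·λⱼ ≤ n`).
So each of the finitely many sizes `j ≤ n` is removed fewer than `L` times, and chains are finite.

Two distinct steps from one partition remove parts of different sizes (`φ` is injective) and
then commute, which gives confluence by the Church–Rosser lemma.
-/

open Relation

lemma exists_lt_forall_dvd {ι : Type*} (s : Finset ι) {g : ι → ℕ} (hg : ∀ i ∈ s, g i ≠ 0)
    (n : ℕ) : ∃ l, n < l ∧ ∀ i ∈ s, g i ∣ l := by
  refine ⟨(n + 1) * ∏ i ∈ s, g i, ?_, fun i hi => Dvd.dvd.mul_left (Finset.dvd_prod_of_mem g hi) _⟩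
  have := Nat.pos_of_ne_zero (Finset.prod_ne_zero_iff.2 hg)
  nlinarith

lemma mul_add_one_le_of_mul_lt_of_dvd {m n l : ℕ} (h : m * n < l) (hm : m ∣ l) :
    m * (n + 1) ≤ l := by
  obtain ⟨q, rfl⟩ := hm
  exact Nat.mul_le_mul_left m (Nat.lt_of_mul_lt_mul_left h)

lemma psize_add_s1 (mu nu : ℕ+ →₀ ℕ) : psize (mu + nu) = psize mu + psize nu :=
  Finsupp.sum_add_index' (fun _ => Nat.mul_zero _) fun _ _ _ => Nat.mul_add _ _ _

lemma psize_single (i : ℕ+) (m : ℕ) : psize (Finsupp.single i m) = i * m :=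
  Finsupp.sum_single_index (Nat.mul_zero _)

lemma psize_mono {mu nu : ℕ+ →₀ ℕ} (h : mu ≤ nu) : psize mu ≤ psize nu := by
  rw [← add_tsub_cancel_of_le h, psize_add_s1]
  exact Nat.le_add_right _ _

lemma mul_apply_le_psize_s1 (mu : ℕ+ →₀ ℕ) (k : ℕ+) : k * mu k ≤ psize mu :=
  psize_single k (mu k) ▸ psize_mono (Finsupp.single_le_iff.2 le_rfl)

section OStep

variable {a b : ℕ+ → ℕ∞} {phi : ℕ+ → ℕ+}

lemma PhiEquiv.mul_toNat_eq (h : PhiEquiv a b phi) {i : ℕ+} (hi : a i ≠ ⊤) :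
    i * (a i).toNat = phi i * (b (phi i)).toNat := by
  simpa using congrArg ENat.toNat (h.2.2.2 i hi)

lemma PhiEquiv.eq_of_phi_eq (h : PhiEquiv a b phi) {i i' : ℕ+} (hi : a i ≠ ⊤)
    (hi' : a i' ≠ ⊤) (he : phi i = phi i') : i = i' :=
  h.2.2.1.injOn hi hi' he

variable (a b phi) in
def OStepAt (i j : ℕ+) (mu mu' : ℕ+ →₀ ℕ) : Prop :=
  phi i = j ∧ a i ≠ ⊤ ∧ b j ≠ ⊤ ∧ b j ≤ (mu j : ℕ∞) ∧
    ∀ l, mu' l = mu l + (if l = i then (a i).toNat else 0)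
                      - (if l = j then (b j).toNat else 0)

lemma oStep_iff {mu mu' : ℕ+ →₀ ℕ} :
    OStep a b phi mu mu' ↔ ∃ i j, OStepAt a b phi i j mu mu' := Iff.rfl

lemma OStepAt.toNat_le {i j : ℕ+} {mu mu' : ℕ+ →₀ ℕ} (hs : OStepAt a b phi i j mu mu') :
    (b j).toNat ≤ mu j :=
  ENat.toNat_le_of_le_natCast hs.2.2.2.1

lemma OStepAt.apply_add_ite {i j : ℕ+} {mu mu' : ℕ+ →₀ ℕ} (hs : OStepAt a b phi i j mu mu')
    (l : ℕ+) :
    mu' l + (if j = l then (b l).toNat else 0) = mu l + (if i = l then (a l).toNat else 0) := by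
  have hle := hs.toNat_le
  simp only [hs.2.2.2.2 l, @eq_comm _ l i, @eq_comm _ l j]
  split_ifs <;> subst_vars <;> omega

lemma OStepAt.add_single {i j : ℕ+} {mu mu' : ℕ+ →₀ ℕ} (hs : OStepAt a b phi i j mu mu') :
    mu' + Finsupp.single j (b j).toNat = mu + Finsupp.single i (a i).toNat := by
  ext l
  have := hs.apply_add_ite l
  simp only [Finsupp.add_apply, Finsupp.single_apply]
  split_ifs at * <;> subst_vars <;> omega

lemma OStepAt.psize_eq (h : PhiEquiv a b phi) {i j : ℕ+} {mu mu' : ℕ+ →₀ ℕ}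
    (hs : OStepAt a b phi i j mu mu') : psize mu' = psize mu := by
  have hw : i * (a i).toNat = j * (b j).toNat := hs.1 ▸ h.mul_toNat_eq hs.2.1
  have := congrArg psize hs.add_single
  rw [psize_add_s1, psize_add_s1, psize_single, psize_single, hw] at this
  omega

lemma OStep.psize_eq (h : PhiEquiv a b phi) {mu mu' : ℕ+ →₀ ℕ} (hs : OStep a b phi mu mu') :
    psize mu' = psize mu := by
  obtain ⟨i, j, hs⟩ := oStep_iff.1 hs
  exact hs.psize_eq h

lemma Relation.ReflTransGen.psize_eq (h : PhiEquiv a b phi) {mu nu : ℕ+ →₀ ℕ}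
    (hr : ReflTransGen (OStep a b phi) mu nu) : psize nu = psize mu := by
  induction hr with
  | refl => rfl
  | tail _ hs ih => rw [hs.psize_eq h, ih]

lemma InA.not_oStep {mu nu : ℕ+ →₀ ℕ} (hmu : InA b mu) : ¬ OStep a b phi mu nu :=
  fun ⟨_, j, _, _, _, hle, _⟩ => (hle.trans_lt (hmu j)).false

lemma InA.eq_of_reflTransGen {mu nu : ℕ+ →₀ ℕ} (hmu : InA b mu)
    (hr : ReflTransGen (OStep a b phi) mu nu) : nu = mu := by
  rcases hr.cases_head with h | ⟨_, hs, _⟩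
  · exact h.symm
  · exact absurd hs hmu.not_oStep

lemma OStepAt.of_le {i j : ℕ+} {mu : ℕ+ →₀ ℕ} (hphi : phi i = j) (hi : a i ≠ ⊤)
    (hj : b j ≠ ⊤) (hle : b j ≤ (mu j : ℕ∞)) :
    OStepAt a b phi i j mu (mu + Finsupp.single i (a i).toNat - Finsupp.single j (b j).toNat) :=
  ⟨hphi, hi, hj, hle, fun l => by simp [Finsupp.single_apply, eq_comm]⟩

lemma OStepAt.le_apply_of_ne {i j l : ℕ+} {mu mu' : ℕ+ →₀ ℕ} (hs : OStepAt a b phi i j mu mu')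
    (hl : l ≠ j) : mu l ≤ mu' l := by
  rw [hs.2.2.2.2 l, if_neg hl]
  omega

lemma OStepAt.right_unique (h : PhiEquiv a b phi) {i i' j : ℕ+} {mu mu' mu'' : ℕ+ →₀ ℕ}
    (hs : OStepAt a b phi i j mu mu') (hs' : OStepAt a b phi i' j mu mu'') : mu' = mu'' := by
  obtain rfl : i = i' := h.eq_of_phi_eq hs.2.1 hs'.2.1 (hs.1.trans hs'.1.symm)
  ext l
  rw [hs.2.2.2.2 l, hs'.2.2.2.2 l]

lemma OStepAt.commute {i₁ j₁ i₂ j₂ : ℕ+} {mu mu₁ mu₂ : ℕ+ →₀ ℕ}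
    (hs₁ : OStepAt a b phi i₁ j₁ mu mu₁) (hs₂ : OStepAt a b phi i₂ j₂ mu mu₂) (hj : j₁ ≠ j₂) :
    ∃ nu, OStepAt a b phi i₂ j₂ mu₁ nu ∧ OStepAt a b phi i₁ j₁ mu₂ nu := by
  obtain ⟨nu, hnu⟩ : ∃ nu, OStepAt a b phi i₂ j₂ mu₁ nu := ⟨_, .of_le hs₂.1 hs₂.2.1 hs₂.2.2.1
    (hs₂.2.2.2.1.trans (by exact_mod_cast hs₁.le_apply_of_ne hj.symm))⟩
  refine ⟨nu, hnu, hs₁.1, hs₁.2.1, hs₁.2.2.1,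
    hs₁.2.2.2.1.trans (by exact_mod_cast hs₂.le_apply_of_ne hj), fun l => ?_⟩
  have hle₁ := hs₁.toNat_le
  have hle₂ := hs₂.toNat_le
  rw [hnu.2.2.2.2 l, hs₁.2.2.2.2 l, hs₂.2.2.2.2 l]
  split_ifs <;> subst_vars <;> omega

lemma oStep_diamond (h : PhiEquiv a b phi) {mu mu₁ mu₂ : ℕ+ →₀ ℕ} (hs₁ : OStep a b phi mu mu₁)
    (hs₂ : OStep a b phi mu mu₂) :
    ∃ nu, ReflGen (OStep a b phi) mu₁ nu ∧ ReflTransGen (OStep a b phi) mu₂ nu := by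
  obtain ⟨i₁, j₁, hs₁⟩ := oStep_iff.1 hs₁
  obtain ⟨i₂, j₂, hs₂⟩ := oStep_iff.1 hs₂
  by_cases hj : j₁ = j₂
  · subst hj
    exact ⟨mu₁, .refl, (hs₁.right_unique h hs₂) ▸ .refl⟩
  · obtain ⟨nu, hnu₁, hnu₂⟩ := hs₁.commute hs₂ hj
    exact ⟨nu, .single ⟨_, _, hnu₁⟩, .single ⟨_, _, hnu₂⟩⟩

lemma eq_of_reflTransGen_of_inA (h : PhiEquiv a b phi) {lam mu mu' : ℕ+ →₀ ℕ}
    (hr : ReflTransGen (OStep a b phi) lam mu) (hmu : InA b mu)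
    (hr' : ReflTransGen (OStep a b phi) lam mu') (hmu' : InA b mu') : mu = mu' := by
  obtain ⟨nu, hnu, hnu'⟩ := church_rosser (fun _ _ _ => oStep_diamond h) hr hr'
  rw [← hmu.eq_of_reflTransGen hnu, ← hmu'.eq_of_reflTransGen hnu']

end OStep

section Chain

variable {a b : ℕ+ → ℕ∞} {phi : ℕ+ → ℕ+} {f : ℕ → ℕ+ →₀ ℕ} {I J : ℕ → ℕ+}

lemma chain_balance (hf : ∀ t, OStepAt a b phi (I t) (J t) (f t) (f (t + 1))) (k : ℕ+) (t : ℕ) :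
    f t k + (b k).toNat * Nat.count (J · = k) t = f 0 k + (a k).toNat * Nat.count (I · = k) t := by
  induction t with
  | zero => simp
  | succ t ih =>
    have hstep := (hf t).apply_add_ite k
    simp only [Nat.count_succ, mul_add]
    split_ifs at hstep ⊢ <;> subst_vars <;> omega

lemma chain_count_eq (h : PhiEquiv a b phi)
    (hf : ∀ t, OStepAt a b phi (I t) (J t) (f t) (f (t + 1))) {k : ℕ+} (hk : a k ≠ ⊤) (t : ℕ) :
    Nat.count (I · = k) t = Nat.count (J · = phi k) t := by
  congr 1
  funext u
  rw [← (hf u).1]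
  exact propext ⟨congrArg phi, h.eq_of_phi_eq (hf u).2.1 hk⟩

lemma chain_psize (h : PhiEquiv a b phi)
    (hf : ∀ t, OStepAt a b phi (I t) (J t) (f t) (f (t + 1))) (t : ℕ) :
    psize (f t) = psize (f 0) := by
  induction t with
  | zero => rfl
  | succ t ih => rw [(hf t).psize_eq h, ih]

lemma chain_coe_le_psize (h : PhiEquiv a b phi)
    (hf : ∀ t, OStepAt a b phi (I t) (J t) (f t) (f (t + 1))) (t : ℕ) :
    (J t : ℕ) ≤ psize (f 0) := by
  have hpos : 0 < (b (J t)).toNat := ENat.toNat_pos (h.2.1 _) (hf t).2.2.1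
  calc (J t : ℕ) ≤ J t * f t (J t) := Nat.le_mul_of_pos_right _ (hpos.trans_le (hf t).toNat_le)
    _ ≤ psize (f t) := mul_apply_le_psize_s1 _ _
    _ = psize (f 0) := chain_psize h hf t

lemma chain_weighted_count_lt (h : PhiEquiv a b phi)
    (hf : ∀ t, OStepAt a b phi (I t) (J t) (f t) (f (t + 1))) (hlam : InA a (f 0)) {L : ℕ}
    (hL : psize (f 0) < L) (hdvd : ∀ t, a (J t) ≠ ⊤ → J t * (a (J t)).toNat ∣ L) (t : ℕ)
    (k : ℕ+) : k * (b k).toNat * Nat.count (J · = k) t < L := by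
  induction t generalizing k with
  | zero => simpa using (Nat.zero_le _).trans_lt hL
  | succ t ih =>
    rw [Nat.count_succ]
    split_ifs with hk
    swap
    · simpa using ih k
    have hfired : k * (b k).toNat * (Nat.count (J · = k) t + 1)
        ≤ k * f 0 k + k * (a k).toNat * Nat.count (I · = k) t := by
      have := chain_balance hf k t
      have := hk ▸ (hf t).toNat_le
      nlinarith
    have hlamk := mul_apply_le_psize_s1 (f 0) k
    by_cases ha : a k = ⊤
    · rw [ha, ENat.toNat_top] at hfired
      omega
    have hw := h.mul_toNat_eq ha
    rw [chain_count_eq h hf ha, hw] at hfired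
    have hlt : f 0 k < (a k).toNat := by
      have := hlam k
      rwa [← ENat.natCast_toNat ha, Nat.cast_lt] at this
    have hk_lt : k * f 0 k < phi k * (b (phi k)).toNat :=
      hw ▸ Nat.mul_lt_mul_of_pos_left hlt k.pos
    have hnext := mul_add_one_le_of_mul_lt_of_dvd (ih (phi k)) (hw ▸ hk ▸ hdvd t (hk ▸ ha))
    linarith [mul_add_one (phi k * (b (phi k)).toNat) (Nat.count (J · = phi k) t)]

lemma chain_count_lt (h : PhiEquiv a b phi)
    (hf : ∀ t, OStepAt a b phi (I t) (J t) (f t) (f (t + 1))) (hlam : InA a (f 0)) {L : ℕ}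
    (hL : psize (f 0) < L) (hdvd : ∀ t, a (J t) ≠ ⊤ → J t * (a (J t)).toNat ∣ L) (t : ℕ)
    (k : ℕ+) : Nat.count (J · = k) t < L := by
  rcases eq_or_ne (Nat.count (J · = k) t) 0 with h0 | h0
  · omega
  obtain ⟨u, -, rfl⟩ := Nat.count_ne_iff_exists.1 h0
  have hpos : 0 < (J u : ℕ) * (b (J u)).toNat :=
    Nat.mul_pos (J u).pos (ENat.toNat_pos (h.2.1 _) (hf u).2.2.1)
  exact (Nat.le_mul_of_pos_left _ hpos).trans_lt (chain_weighted_count_lt h hf hlam hL hdvd t _)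

end Chain

theorem not_exists_infinite_oStep_chain {a b : ℕ+ → ℕ∞} {phi : ℕ+ → ℕ+}
    (h : PhiEquiv a b phi) {lam : ℕ+ →₀ ℕ} (hlam : InA a lam) :
    ¬ ∃ f : ℕ → (ℕ+ →₀ ℕ), f 0 = lam ∧ ∀ k, OStep a b phi (f k) (f (k + 1)) := by
  rintro ⟨f, rfl, hf⟩
  choose I J hf using hf
  set n := psize (f 0)
  set S : Finset ℕ+ := Finset.Iic n.toPNat'
  have hJS : ∀ t, J t ∈ S := fun t => Finset.mem_Iic.2 <| by
    have := chain_coe_le_psize h hf t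
    rw [← PNat.coe_le_coe, Nat.toPNat'_coe, if_pos ((J t).pos.trans_le this)]
    exact this
  obtain ⟨L, hnL, hdvd⟩ := exists_lt_forall_dvd (g := fun k => (k : ℕ) * (a k).toNat)
    {k ∈ S | a k ≠ ⊤} (fun k hk => Nat.mul_ne_zero k.ne_zero
      (ENat.toNat_pos (h.1 k) (Finset.mem_filter.1 hk).2).ne') n
  have hcard := Finset.card_le_mul_card_image_of_maps_to (s := Finset.range (L * S.card + 1))
    (fun t _ => hJS t) L fun k _ => by
      rw [← Nat.count_eq_card_filter_range]
      exact (chain_count_lt h hf hlam hnL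
        (fun t ha => hdvd (J t) (Finset.mem_filter.2 ⟨hJS t, ha⟩)) _ k).le
  rw [Finset.card_range] at hcard
  omega

/-- termination, confluence, and size preservation of O'Hara's
algorithm: (i) no infinite chain starts at `λ ∈ 𝒜`; (ii) any two maximal
rewrite sequences from `λ` end at the same partition (normal forms reachable
from `λ` are unique); (iii) this common end `ψ(λ)` lies in `ℬ` and has the
same size as `λ`.  (A partition `μ` is a normal form iff `m_j(μ) < b_j` for
all `j`, i.e. iff `InA b μ`.) -/
theorem ohara_termination_confluence (a b : ℕ+ → ℕ∞) (phi : ℕ+ → ℕ+)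
    (h : PhiEquiv a b phi) (lam : ℕ+ →₀ ℕ) (hlam : InA a lam) :
    (¬ ∃ f : ℕ → (ℕ+ →₀ ℕ), f 0 = lam ∧ ∀ k, OStep a b phi (f k) (f (k + 1))) ∧
    (∀ mu mu' : ℕ+ →₀ ℕ,
      Relation.ReflTransGen (OStep a b phi) lam mu → InA b mu →
      Relation.ReflTransGen (OStep a b phi) lam mu' → InA b mu' → mu = mu') ∧
    (∀ mu : ℕ+ →₀ ℕ,
      Relation.ReflTransGen (OStep a b phi) lam mu → InA b mu →
      InA b mu ∧ psize mu = psize lam) :=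
  ⟨not_exists_infinite_oStep_chain h hlam,
    fun _ _ hr hmu hr' hmu' => eq_of_reflTransGen_of_inA h hr hmu hr' hmu',
    fun _ hr hmu => ⟨hmu, hr.psize_eq h⟩⟩
end

section
/- Let t ∈ P and let ε_1, …, ε_m be real numbers with ε_j < a_j − t_j for every j. If t = s⁰ → s¹ → ⋯ → s^K is any rewrite sequence from t and 0 ≤ k < k' ≤ K, then there exists an index j with |s^{k'}_j − s^k_j| > ε_j; in other words, any box of size ε_1 × ⋯ × ε_m contains at most one of the vectors s⁰, s¹, …, s^K. -/
open scoped BigOperators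

/-- One step `s → s'` of the continuous O'Hara algorithm on `ℝ^m`:
for some index `j` with `s_j ≥ b_j`, subtract `b_j` from the `j`-th
coordinate and add `a_{j-1}` to the `(j-1)`-st coordinate
(indices cyclically modulo `m`). -/
def CStep (m : ℕ) [NeZero m] (a b : Fin m → ℝ) (s s' : Fin m → ℝ) : Prop :=
  ∃ j : Fin m, b j ≤ s j ∧
    ∀ l, s' l = s l + (if l = j - 1 then a (j - 1) else 0)
                    - (if l = j then b j else 0)

/-- Membership in the half-open box `[0,a_1) × ⋯ × [0,a_m)`. -/
def InBox {m : ℕ} (a : Fin m → ℝ) (t : Fin m → ℝ) : Prop :=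
  ∀ j, 0 ≤ t j ∧ t j < a j

/-!
A rewrite sequence is determined by its start `t` and the indices `J 0, J 1, …` fired at each
step: after `n` steps, coordinate `l` equals `t_l + a_l N_{l+1}(n) - b_l N_l(n)`, where `N_q(n)`
counts the firings of `q` before step `n`. Between steps `k < k'` coordinate `l` thus changes by
`a_l c_{l+1} - b_l c_l`, where `c_q` counts the firings of `q` in the window; some `c_q` is
positive. If some `c_l = 0` while `c_{l+1} > 0`, coordinate `l` grows by at least `a_l`.
Otherwise every `c_q` is positive; consider the first step `r` at which some index `l` fires for
the `c_l`-th time since the start. Legality of that step, `b_l ≤ s^r_l`, reads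
`b_l c_l ≤ t_l + a_l N_{l+1}(r)` with `N_{l+1}(r) < c_{l+1}`, so coordinate `l` grows by at
least `a_l - t_l` over the window.
-/

open Fin.NatCast in
theorem Fin.exists_not_and_add_one {m : ℕ} [NeZero m] {p : Fin m → Prop}
    (htrue : ∃ q, p q) (hfalse : ∃ q, ¬p q) : ∃ l, ¬p l ∧ p (l + 1) := by
  by_contra! hstable
  obtain ⟨q, hq⟩ := htrue
  obtain ⟨q₀, hq₀⟩ := hfalse
  have hnot : ∀ n : ℕ, ¬p (q₀ + n) := by
    intro n
    induction n with
    | zero => simpa using hq₀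
    | succ n ih => simpa [Nat.cast_succ, add_assoc] using hstable _ ih
  exact hnot (q - q₀).val (by simpa [Fin.cast_val_eq_self] using hq)

theorem Nat.exists_count_add_one_eq {ι : Type*} [Fintype ι] [DecidableEq ι]
    {J : ℕ → ι} {c : ι → ℕ} {n : ℕ} (hc : ∀ q, 1 ≤ c q)
    (hn : ∃ q, c q ≤ Nat.count (J · = q) n) :
    ∃ r < n, (∀ q, Nat.count (J · = q) r < c q) ∧ Nat.count (J · = J r) r + 1 = c (J r) := by
  have hP : ∃ r, ∃ q, c q ≤ Nat.count (J · = q) r := ⟨n, hn⟩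
  have hzero : Nat.find hP ≠ 0 := fun h => by
    obtain ⟨q, hq⟩ := h ▸ Nat.find_spec hP
    have := hc q
    simp only [Nat.count_zero] at hq
    omega
  obtain ⟨r, hr⟩ := Nat.exists_eq_succ_of_ne_zero hzero
  have hbefore : ∀ q, Nat.count (J · = q) r < c q := by
    simpa using Nat.find_min hP (hr ▸ r.lt_succ_self)
  obtain ⟨l, hl⟩ : ∃ l, c l ≤ Nat.count (J · = l) (r + 1) := by
    simpa [hr] using Nat.find_spec hP
  have hfires : J r = l :=
    Nat.count_lt_count_succ_iff.1 ((hbefore l).trans_le hl)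
  have hrn : r + 1 ≤ n := by simpa [hr] using Nat.find_min' hP hn
  have hcount : Nat.count (J · = l) (r + 1) = Nat.count (J · = l) r + 1 :=
    Nat.count_succ_eq_succ_count_iff.2 hfires
  refine ⟨r, hrn, hbefore, ?_⟩
  have := hbefore l
  rw [hfires]
  omega

section Firing

variable {m : ℕ} [NeZero m] {a b t : Fin m → ℝ} {J : ℕ → Fin m}

def displacement (a b : Fin m → ℝ) (c : Fin m → ℕ) (l : Fin m) : ℝ :=
  a l * c (l + 1) - b l * c l

def firingCounts (J : ℕ → Fin m) (n : ℕ) (q : Fin m) : ℕ :=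
  Nat.count (J · = q) n

def stateAfter (a b t : Fin m → ℝ) (J : ℕ → Fin m) (n : ℕ) (l : Fin m) : ℝ :=
  t l + displacement a b (firingCounts J n) l

theorem stateAfter_zero (l : Fin m) : stateAfter a b t J 0 l = t l := by
  simp [stateAfter, displacement, firingCounts]

theorem stateAfter_succ (n : ℕ) (l : Fin m) :
    stateAfter a b t J (n + 1) l = stateAfter a b t J n l
      + (if l = J n - 1 then a (J n - 1) else 0) - (if l = J n then b (J n) else 0) := by
  have hprev : l = J n - 1 ↔ J n = l + 1 := by rw [eq_sub_iff_add_eq, eq_comm]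
  simp only [stateAfter, displacement, firingCounts, Nat.count_succ, hprev, eq_comm (a := l)]
  split_ifs <;> push_cast <;> grind

theorem eq_stateAfter_of_steps {s : ℕ → Fin m → ℝ} {K : ℕ} (hs0 : s 0 = t)
    (hsucc : ∀ k < K, ∀ l, s (k + 1) l = s k l
      + (if l = J k - 1 then a (J k - 1) else 0) - (if l = J k then b (J k) else 0)) :
    ∀ n ≤ K, s n = stateAfter a b t J n := by
  intro n hn
  induction n with
  | zero => funext l; rw [hs0, stateAfter_zero]
  | succ n ih =>
    funext l
    rw [hsucc n hn, ih (by omega), stateAfter_succ]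

theorem stateAfter_sub_stateAfter {k k' : ℕ} (hk : k ≤ k') (l : Fin m) :
    stateAfter a b t J k' l - stateAfter a b t J k l
      = displacement a b (firingCounts J k' - firingCounts J k) l := by
  have hmono : ∀ q, firingCounts J k q ≤ firingCounts J k' q :=
    fun _ => Nat.count_monotone _ hk
  simp only [stateAfter, displacement, Pi.sub_apply, Nat.cast_sub (hmono _)]
  ring

theorem exists_sub_le_displacement_of_forall_pos (ha : ∀ j, 0 ≤ a j) {c : Fin m → ℕ} {n : ℕ}
    (hlegal : ∀ r < n, b (J r) ≤ stateAfter a b t J r (J r))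
    (hc : ∀ q, 1 ≤ c q) (hcn : c ≤ firingCounts J n) :
    ∃ l, a l - t l ≤ displacement a b c l := by
  obtain ⟨r, hr, hbefore, hlast⟩ := Nat.exists_count_add_one_eq hc ⟨0, hcn 0⟩
  refine ⟨J r, ?_⟩
  have hlegal_r := hlegal r hr
  have hlast' : (firingCounts J r (J r) : ℝ) + 1 = c (J r) := by exact_mod_cast hlast
  have hnext : (firingCounts J r (J r + 1) : ℝ) + 1 ≤ c (J r + 1) := by
    exact_mod_cast hbefore (J r + 1)
  have := mul_le_mul_of_nonneg_left hnext (ha (J r))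
  rw [stateAfter, displacement] at hlegal_r
  rw [displacement, ← hlast']
  linarith

theorem exists_sub_le_displacement (ha : ∀ j, 0 ≤ a j) (ht : ∀ j, 0 ≤ t j)
    {c : Fin m → ℕ} {n : ℕ} (hlegal : ∀ r < n, b (J r) ≤ stateAfter a b t J r (J r))
    (hc : c ≠ 0) (hcn : c ≤ firingCounts J n) :
    ∃ l, a l - t l ≤ displacement a b c l := by
  by_cases hall : ∀ q, 1 ≤ c q
  · exact exists_sub_le_displacement_of_forall_pos ha hlegal hall hcn
  obtain ⟨l, hl, hl'⟩ := Fin.exists_not_and_add_one (p := (1 ≤ c ·))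
    ((Function.ne_iff.1 hc).imp fun _ => Nat.one_le_iff_ne_zero.2) (not_forall.1 hall)
  refine ⟨l, ?_⟩
  have hnext : (1 : ℝ) ≤ c (l + 1) := by exact_mod_cast hl'
  have := mul_le_mul_of_nonneg_left hnext (ha l)
  rw [displacement, show c l = 0 by omega, Nat.cast_zero]
  linarith [ht l]

theorem exists_sub_le_stateAfter_sub (ha : ∀ j, 0 ≤ a j) (ht : ∀ j, 0 ≤ t j) {k k' : ℕ}
    (hlegal : ∀ r < k', b (J r) ≤ stateAfter a b t J r (J r)) (hk : k < k') :
    ∃ l, a l - t l ≤ stateAfter a b t J k' l - stateAfter a b t J k l := by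
  have hfires : firingCounts J k (J k) < firingCounts J k' (J k) :=
    Nat.count_strict_mono rfl hk
  have hwindow : firingCounts J k' - firingCounts J k ≠ 0 := fun h => by
    have := congrFun h (J k)
    simp only [Pi.sub_apply, Pi.zero_apply] at this
    omega
  obtain ⟨l, hl⟩ := exists_sub_le_displacement ha ht hlegal hwindow tsub_le_self
  exact ⟨l, hl.trans_eq (stateAfter_sub_stateAfter hk.le l).symm⟩

end Firing

theorem ohara_box_lemma_general {m : ℕ} [NeZero m] (a b : Fin m → ℝ)
    (ha : ∀ j, 0 < a j)
    (t : Fin m → ℝ) (ht : InBox a t)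
    (eps : Fin m → ℝ) (heps : ∀ j, eps j < a j - t j)
    (s : ℕ → Fin m → ℝ) (K : ℕ) (hs0 : s 0 = t)
    (hstep : ∀ k < K, CStep m a b (s k) (s (k + 1)))
    (k k' : ℕ) (hk : k < k') (hk' : k' ≤ K) :
    ∃ j, eps j < |s k' j - s k j| := by
  choose! J hJle hJeq using hstep
  have hs := eq_stateAfter_of_steps hs0 hJeq
  obtain ⟨l, hl⟩ := exists_sub_le_stateAfter_sub (fun j => (ha j).le) (fun j => (ht j).1)
    (fun r hr => hs r (hr.trans_le hk').le ▸ hJle r (hr.trans_le hk')) hk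
  refine ⟨l, (heps l).trans_le ?_⟩
  rw [hs k' hk', hs k (hk.le.trans hk')]
  exact hl.trans (le_abs_self _)

/-- along any rewrite sequence from `t ∈ P`, no box of size
`ε_1 × ⋯ × ε_m` with `ε_j < a_j - t_j` contains two of the intermediate
vectors: for `k < k'` there is a coordinate `j` with `|s^{k'}_j - s^k_j| > ε_j`. -/
theorem ohara_box_lemma {m : ℕ} [NeZero m] (i a b : Fin m → ℝ)
    (hi : ∀ j, 0 < i j) (ha : ∀ j, 0 < a j) (hb : ∀ j, 0 < b j)
    (hiab : ∀ j, i j * a j = i (j + 1) * b (j + 1))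
    (t : Fin m → ℝ) (ht : InBox a t)
    (eps : Fin m → ℝ) (heps : ∀ j, eps j < a j - t j)
    (s : ℕ → Fin m → ℝ) (K : ℕ) (hs0 : s 0 = t)
    (hstep : ∀ k < K, CStep m a b (s k) (s (k + 1)))
    (k k' : ℕ) (hk : k < k') (hk' : k' ≤ K) :
    ∃ j, eps j < |s k' j - s k j| :=
  ohara_box_lemma_general a b ha t ht eps heps s K hs0 hstep k k' hk hk'
end

section
/- For every t ∈ P there is no infinite chain t = s⁰ → s¹ → s² → ⋯ under the O'Hara step relation; consequently every rewrite sequence from t is finite and extends to a maximal rewrite sequence ending at a normal form. -/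
open scoped BigOperators

/-!
Firing index `j` removes `b j` from coordinate `j` and adds `a (j - 1)` to coordinate `j - 1`, so
after firing each `j` exactly `n j` times, in any order, one sits at
`t l + a l * n (l + 1) - b l * n l`. Call `ν` a barrier if this vector is a normal form. While the
firing counts stay below a barrier, index `j` cannot fire when `n j = ν j`, since then its
coordinate is at most the barrier's, which is `< b j`; so the counts stay below `ν` and every
rewrite sequence has length at most `∑ j, ν j`.

For `t ∈ P` a barrier exists: with `Q j = i j * b j` and `i j * a j = Q (j + 1)`, the barrier
condition at `j` reads `Q (j + 1) * (ν (j + 1) + 1) - Q j * (ν j + 1) < i j * (a j - t j)`, which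
holds once all `Q j * (ν j + 1)` lie within half of `min j, i j * (a j - t j)` of a common value.
Such `ν` exist by simultaneous Dirichlet approximation of the numbers `1 / Q j`.
-/

section Termination

variable {α : Type*} {R : α → α → Prop} {x : α}

theorem Acc.not_exists_infinite_chain (h : Acc (flip R) x) :
    ¬ ∃ f : ℕ → α, f 0 = x ∧ ∀ k, R (f k) (f (k + 1)) := by
  induction h with
  | intro x _ ih =>
    rintro ⟨f, rfl, hf⟩
    exact ih (f 1) (hf 0) ⟨fun k => f (k + 1), rfl, fun k => hf (k + 1)⟩

theorem Acc.of_reflTransGen {y : α} (h : Acc (flip R) x) (hxy : Relation.ReflTransGen R x y) :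
    Acc (flip R) y := by
  induction hxy with
  | refl => exact h
  | tail _ hbc ih => exact ih.inv hbc

theorem Acc.exists_normal_form (h : Acc (flip R) x) :
    ∃ z, Relation.ReflTransGen R x z ∧ ∀ z', ¬ R z z' := by
  induction h with
  | intro x _ ih =>
    by_cases hx : ∃ y, R x y
    · obtain ⟨y, hxy⟩ := hx
      obtain ⟨z, hyz, hz⟩ := ih y hxy
      exact ⟨z, .head hxy hyz, hz⟩
    · push Not at hx
      exact ⟨x, .refl, hx⟩

end Termination

section Dirichlet

variable {ι : Type*} [Fintype ι]

theorem exists_pos_nat_abs_mul_sub_int_lt (α : ι → ℝ) {ε : ℝ} (hε : 0 < ε) :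
    ∃ k : ℕ, 0 < k ∧ ∃ p : ι → ℤ, ∀ j, |k * α j - p j| < ε := by
  set u : ℕ → ι → ℝ := fun n j => Int.fract (n * α j)
  have hu : ∀ n, u n ∈ Set.Icc 0 1 := fun n =>
    ⟨fun j => Int.fract_nonneg _, fun j => (Int.fract_lt_one _).le⟩
  -- Late consecutive terms of a convergent subsequence of the fractional parts are `ε`-close.
  obtain ⟨_, _, φ, hφ, hlim⟩ := isCompact_Icc.tendsto_subseq hu
  obtain ⟨N, hN⟩ := Metric.cauchySeq_iff'.1 hlim.cauchySeq ε hε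
  have hclose := (dist_pi_lt_iff hε).1 (hN (N + 1) N.le_succ)
  have hlt : φ N < φ (N + 1) := hφ N.lt_succ_self
  refine ⟨φ (N + 1) - φ N, Nat.sub_pos_of_lt hlt,
    fun j => ⌊φ (N + 1) * α j⌋ - ⌊φ N * α j⌋, fun j => ?_⟩
  have hj := hclose j
  rw [Real.dist_eq] at hj
  convert hj using 2
  simp only [u, Function.comp_apply, Int.fract, Nat.cast_sub hlt.le]
  push_cast
  ring

theorem exists_nat_forall_abs_sub_mul_succ_lt {Q : ι → ℝ} (hQ : ∀ j, 0 < Q j) {δ : ℝ}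
    (hδ : 0 < δ) : ∃ T : ℝ, ∃ ν : ι → ℕ, ∀ j, |T - Q j * (ν j + 1)| < δ := by
  have hδ' : 0 < min δ 1 := lt_min hδ one_pos
  have hS : ∀ j, Q j < 1 + ∑ j, Q j := fun j => by
    have := Finset.single_le_sum (fun j _ => (hQ j).le) (Finset.mem_univ j)
    linarith
  have hS0 : 0 < 1 + ∑ j, Q j := by
    have := Finset.sum_nonneg fun j (_ : j ∈ Finset.univ) => (hQ j).le
    linarith
  obtain ⟨k, hk, p, hp⟩ :=
    exists_pos_nat_abs_mul_sub_int_lt (fun j => (Q j)⁻¹) (div_pos hδ' hS0)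
  have hclose : ∀ j, |k - Q j * p j| < min δ 1 := fun j =>
    calc |k - Q j * p j| = Q j * |k * (Q j)⁻¹ - p j| := by
          rw [← abs_of_pos (hQ j), ← abs_mul, abs_of_pos (hQ j), mul_sub, mul_left_comm,
            mul_inv_cancel₀ (hQ j).ne', mul_one]
      _ ≤ Q j * (min δ 1 / (1 + ∑ j, Q j)) := by gcongr; exacts [(hQ j).le, (hp j).le]
      _ < min δ 1 := by
          rw [mul_div_assoc', div_lt_iff₀ hS0, mul_comm]
          exact mul_lt_mul_of_pos_left (hS j) hδ'
  -- Capping the tolerance at `1` forces `p j ≥ 1`, because `k ≥ 1`.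
  have hpos : ∀ j, 0 < p j := fun j => by
    have hk1 : (1 : ℝ) ≤ k := by exact_mod_cast hk
    have : 0 < Q j * p j := by linarith [(abs_lt.1 (hclose j)).2, min_le_right δ 1]
    exact_mod_cast pos_of_mul_pos_right this (hQ j).le
  have hsucc : ∀ j, ∃ n : ℕ, (n : ℝ) + 1 = p j := fun j =>
    ⟨(p j - 1).toNat, by
      rw [← Int.cast_natCast, Int.toNat_of_nonneg (by linarith [hpos j])]; push_cast; ring⟩
  choose ν hν using hsucc
  exact ⟨k, ν, fun j => hν j ▸ (hclose j).trans_le (min_le_left δ 1)⟩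

end Dirichlet

namespace CStep

variable {m : ℕ} [NeZero m] (a b : Fin m → ℝ)

def fireState (t : Fin m → ℝ) (n : Fin m → ℕ) : Fin m → ℝ :=
  fun l => t l + a l * n (l + 1) - b l * n l

@[simp]
theorem fireState_zero (t : Fin m → ℝ) : fireState a b t 0 = t := by
  ext l
  simp [fireState]

variable {a b}

theorem exists_eq_fireState {t s' : Fin m → ℝ} {n : Fin m → ℕ}
    (h : CStep m a b (fireState a b t n) s') :
    ∃ j, b j ≤ fireState a b t n j ∧ s' = fireState a b t (n + Pi.single j 1) := by
  obtain ⟨j, hj, hs'⟩ := h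
  refine ⟨j, hj, funext fun l => ?_⟩
  have hprev : (if l = j - 1 then a (j - 1) else 0)
      = a l * ((Pi.single j 1 : Fin m → ℕ) (l + 1) : ℝ) := by
    simp only [Pi.single_apply, eq_sub_iff_add_eq]
    split_ifs with h
    · simp [← h]
    · simp
  have hself : (if l = j then b j else 0) = b l * ((Pi.single j 1 : Fin m → ℕ) l : ℝ) := by
    rw [Pi.single_apply]
    split_ifs with h <;> simp [h]
  rw [hs' l, hprev, hself]
  simp only [fireState, Pi.add_apply, Nat.cast_add]
  ring

theorem lt_of_le_of_le_fireState {t : Fin m → ℝ} {n ν : Fin m → ℕ} (ha : ∀ j, 0 ≤ a j)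
    (hν : ∀ j, fireState a b t ν j < b j) (hn : n ≤ ν) {j : Fin m}
    (hj : b j ≤ fireState a b t n j) : n j < ν j := by
  by_contra! hνn
  have hle : fireState a b t n j ≤ fireState a b t ν j := by
    have haj := ha j
    have hnj : (n (j + 1) : ℝ) ≤ ν (j + 1) := by exact_mod_cast hn (j + 1)
    simp only [fireState, le_antisymm (hn j) hνn]
    gcongr
  linarith [hν j]

theorem acc_fireState {t : Fin m → ℝ} {ν : Fin m → ℕ} (ha : ∀ j, 0 ≤ a j)
    (hν : ∀ j, fireState a b t ν j < b j) {n : Fin m → ℕ} (hn : n ≤ ν) :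
    Acc (flip (CStep m a b)) (fireState a b t n) := by
  induction hd : ∑ j, (ν j - n j) using Nat.strong_induction_on generalizing n with
  | _ d ih =>
  refine ⟨_, fun s' hs' => ?_⟩
  obtain ⟨j, hj, rfl⟩ := exists_eq_fireState hs'
  have hlt := lt_of_le_of_le_fireState ha hν hn hj
  have hn' : n + Pi.single j 1 ≤ ν := fun l => by
    rcases eq_or_ne l j with rfl | hl
    · simp only [Pi.add_apply, Pi.single_eq_same]
      exact hlt
    · simpa only [Pi.add_apply, Pi.single_eq_of_ne hl, add_zero] using hn l
  refine ih _ ?_ hn' rfl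
  rw [← hd]
  refine Finset.sum_lt_sum (fun l _ => Nat.sub_le_sub_left (Nat.le_add_right _ _) _)
    ⟨j, Finset.mem_univ _, ?_⟩
  simp only [Pi.add_apply, Pi.single_eq_same]
  omega

theorem exists_fireState_lt (i : Fin m → ℝ) (hi : ∀ j, 0 < i j) (hb : ∀ j, 0 < b j)
    (hiab : ∀ j, i j * a j = i (j + 1) * b (j + 1)) {t : Fin m → ℝ} (ht : ∀ j, t j < a j) :
    ∃ ν : Fin m → ℕ, ∀ j, fireState a b t ν j < b j := by
  obtain ⟨j₀, hj₀⟩ := Finite.exists_min fun j => i j * (a j - t j)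
  have hc : 0 < i j₀ * (a j₀ - t j₀) := mul_pos (hi j₀) (sub_pos.2 (ht j₀))
  obtain ⟨T, ν, hν⟩ :=
    exists_nat_forall_abs_sub_mul_succ_lt (fun j => mul_pos (hi j) (hb j)) (half_pos hc)
  refine ⟨ν, fun j => lt_of_mul_lt_mul_left ?_ (hi j).le⟩
  have key : i j * fireState a b t ν j = i (j + 1) * b (j + 1) * (ν (j + 1) + 1)
      - i j * b j * (ν j + 1) - i j * (a j - t j) + i j * b j := by
    simp only [fireState]
    linear_combination ((ν (j + 1) : ℝ) + 1) * hiab j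
  rw [key]
  linarith [abs_lt.1 (hν j), abs_lt.1 (hν (j + 1)), hj₀ j]

end CStep

/-- for every `t ∈ P` there is no infinite chain under the
O'Hara step relation; consequently every rewrite sequence from `t` extends
to a maximal one ending at a normal form (`s_j < b_j` for all `j`). -/
theorem ohara_termination {m : ℕ} [NeZero m] (i a b : Fin m → ℝ)
    (hi : ∀ j, 0 < i j) (ha : ∀ j, 0 < a j) (hb : ∀ j, 0 < b j)
    (hiab : ∀ j, i j * a j = i (j + 1) * b (j + 1))
    (t : Fin m → ℝ) (ht : InBox a t) :
    (¬ ∃ f : ℕ → Fin m → ℝ, f 0 = t ∧ ∀ k, CStep m a b (f k) (f (k + 1))) ∧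
    (∀ u : Fin m → ℝ, Relation.ReflTransGen (CStep m a b) t u →
      ∃ w : Fin m → ℝ, Relation.ReflTransGen (CStep m a b) u w ∧
        ∀ j, w j < b j) := by
  obtain ⟨ν, hν⟩ := CStep.exists_fireState_lt i hi hb hiab fun j => (ht j).2
  have hacc : Acc (flip (CStep m a b)) t := by
    simpa using CStep.acc_fireState (n := 0) (fun j => (ha j).le) hν (fun j => (ν j).zero_le)
  refine ⟨hacc.not_exists_infinite_chain, fun u hu => ?_⟩
  obtain ⟨w, huw, hw⟩ := (hacc.of_reflTransGen hu).exists_normal_form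
  exact ⟨w, huw, fun j => not_le.1 fun hj => hw _ ⟨j, hj, fun l => rfl⟩⟩
end

section
/- Let t ∈ P. If t = s⁰ → s¹ → ⋯ → sᵏ and t = r⁰ → r¹ → ⋯ → r^{k'} are two maximal rewrite sequences from t (so sᵏ and r^{k'} are normal forms), then sᵏ = r^{k'} and k = k'; that is, the resulting normal form and the number of steps are independent of the choices made during the execution of the algorithm. -/
open scoped BigOperators

/-!
A step at coordinate `j` only increases the other coordinates (since `a ≥ 0`), so two different
steps enabled at the same vector stay enabled after each other, and performing both in either
order gives the same vector. This "diamond with sides of length one" forces every step out of a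
vector that reaches a normal form in `k` steps to land on a vector that reaches the same normal
form in exactly `k - 1` steps; iterating, all maximal rewrite sequences agree in length and
endpoint.
-/

namespace Relation

variable {α : Type*} (r : α → α → Prop)

def NSteps : ℕ → α → α → Prop
  | 0, x, y => x = y
  | n + 1, x, y => ∃ z, r x z ∧ NSteps n z y

def IsNormalForm (x : α) : Prop := ∀ y, ¬ r x y

def Diamond : Prop := ∀ x y z, r x y → r x z → y = z ∨ ∃ u, r y u ∧ r z u

variable {r}

theorem NSteps.of_seq {k : ℕ} {s : ℕ → α} (hs : ∀ l < k, r (s l) (s (l + 1))) :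
    NSteps r k (s 0) (s k) := by
  induction k generalizing s with
  | zero => rfl
  | succ k ih => exact ⟨s 1, hs 0 k.succ_pos, ih fun l hl => hs (l + 1) (by omega)⟩

theorem NSteps.eq_zero_of_isNormalForm {n : ℕ} {x y : α} (hx : IsNormalForm r x)
    (h : NSteps r n x y) : n = 0 ∧ x = y := by
  cases n with
  | zero => exact ⟨rfl, h⟩
  | succ n => obtain ⟨z, hxz, -⟩ := h; exact absurd hxz (hx z)

theorem Diamond.nSteps_of_step (hr : Diamond r) {n : ℕ} {x y e : α}
    (he : IsNormalForm r e) (hxe : NSteps r n x e) (hxy : r x y) :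
    ∃ k, n = k + 1 ∧ NSteps r k y e := by
  induction n generalizing x y with
  | zero => subst hxe; exact absurd hxy (he y)
  | succ n ih =>
    obtain ⟨x₁, hxx₁, hx₁e⟩ := hxe
    rcases hr x x₁ y hxx₁ hxy with rfl | ⟨u, hx₁u, hyu⟩
    · exact ⟨n, rfl, hx₁e⟩
    · obtain ⟨k, rfl, hue⟩ := ih hx₁e hx₁u
      exact ⟨k + 1, rfl, u, hyu, hue⟩

theorem Diamond.nSteps_sub (hr : Diamond r) {k n : ℕ} {x w e : α}
    (he : IsNormalForm r e) (hxe : NSteps r k x e) (hxw : NSteps r n x w) :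
    n ≤ k ∧ NSteps r (k - n) w e := by
  induction n generalizing x k with
  | zero => subst hxw; exact ⟨k.zero_le, hxe⟩
  | succ n ih =>
    obtain ⟨y, hxy, hyw⟩ := hxw
    obtain ⟨k, rfl, hye⟩ := hr.nSteps_of_step he hxe hxy
    obtain ⟨hnk, hwe⟩ := ih hye hyw
    exact ⟨by omega, by simpa using hwe⟩

theorem Diamond.unique_normalForm (hr : Diamond r) {k k' : ℕ} {x e e' : α}
    (he : IsNormalForm r e) (hxe : NSteps r k x e)
    (he' : IsNormalForm r e') (hxe' : NSteps r k' x e') : e = e' ∧ k = k' := by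
  obtain ⟨hk'k, he'e⟩ := hr.nSteps_sub he hxe hxe'
  obtain ⟨hkk', rfl⟩ := he'e.eq_zero_of_isNormalForm he'
  exact ⟨rfl, by omega⟩

end Relation

open Relation

section CStep

variable {m : ℕ} [NeZero m] {a b : Fin m → ℝ}

theorem isNormalForm_cStep {x : Fin m → ℝ} (hx : ∀ j, x j < b j) :
    IsNormalForm (CStep m a b) x :=
  fun _ ⟨j, hj, _⟩ => (hj.trans_lt (hx j)).false

theorem le_apply_of_ne_of_cStep_at (ha : ∀ j, 0 ≤ a j) {x y : Fin m → ℝ} {j l : Fin m}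
    (hy : ∀ l, y l = x l + (if l = j - 1 then a (j - 1) else 0) - (if l = j then b j else 0))
    (hl : l ≠ j) : x l ≤ y l := by
  rw [hy, if_neg hl, sub_zero, le_add_iff_nonneg_right]
  split_ifs
  exacts [ha _, le_rfl]

theorem cStep_diamond (ha : ∀ j, 0 ≤ a j) : Diamond (CStep m a b) := by
  rintro x y z ⟨j, hj, hy⟩ ⟨j', hj', hz⟩
  by_cases hjj' : j = j'
  · subst hjj'
    exact .inl (funext fun l => by rw [hy, hz])
  · refine .inr ⟨fun l => y l + (if l = j' - 1 then a (j' - 1) else 0)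
      - (if l = j' then b j' else 0), ⟨j', ?_, fun l => rfl⟩, ⟨j, ?_, fun l => ?_⟩⟩
    · exact hj'.trans (le_apply_of_ne_of_cStep_at ha hy (Ne.symm hjj'))
    · exact hj.trans (le_apply_of_ne_of_cStep_at ha hz hjj')
    · simp only [hy, hz]
      ring

end CStep

theorem ohara_confluence_general {m : ℕ} [NeZero m] (a b : Fin m → ℝ)
    (ha : ∀ j, 0 < a j)
    (t : Fin m → ℝ)
    (s : ℕ → Fin m → ℝ) (k : ℕ) (hs0 : s 0 = t)
    (hs : ∀ l < k, CStep m a b (s l) (s (l + 1)))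
    (hsend : ∀ j, s k j < b j)
    (r : ℕ → Fin m → ℝ) (k' : ℕ) (hr0 : r 0 = t)
    (hr : ∀ l < k', CStep m a b (r l) (r (l + 1)))
    (hrend : ∀ j, r k' j < b j) :
    s k = r k' ∧ k = k' := by
  have hsteps_s : NSteps (CStep m a b) k t (s k) := hs0 ▸ NSteps.of_seq hs
  have hsteps_r : NSteps (CStep m a b) k' t (r k') := hr0 ▸ NSteps.of_seq hr
  exact (cStep_diamond fun j => (ha j).le).unique_normalForm
    (isNormalForm_cStep hsend) hsteps_s (isNormalForm_cStep hrend) hsteps_r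

/-- confluence of the continuous O'Hara algorithm: any two
maximal rewrite sequences from `t ∈ P` end at the same normal form and
have the same length. -/
theorem ohara_confluence {m : ℕ} [NeZero m] (i a b : Fin m → ℝ)
    (hi : ∀ j, 0 < i j) (ha : ∀ j, 0 < a j) (hb : ∀ j, 0 < b j)
    (hiab : ∀ j, i j * a j = i (j + 1) * b (j + 1))
    (t : Fin m → ℝ) (ht : InBox a t)
    (s : ℕ → Fin m → ℝ) (k : ℕ) (hs0 : s 0 = t)
    (hs : ∀ l < k, CStep m a b (s l) (s (l + 1)))
    (hsend : ∀ j, s k j < b j)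
    (r : ℕ → Fin m → ℝ) (k' : ℕ) (hr0 : r 0 = t)
    (hr : ∀ l < k', CStep m a b (r l) (r (l + 1)))
    (hrend : ∀ j, r k' j < b j) :
    s k = r k' ∧ k = k' :=
  ohara_confluence_general a b ha t s k hs0 hs hsend r k' hr0 hr hrend
end

section
/- The map ψ is a bijection from P onto Q, and for every t ∈ P one has Σ_j i_j·ψ(t)_j = Σ_j i_j·t_j; that is, ψ(t) − t lies in the hyperplane ℋ = {x ∈ ℝ^m : i_1x_1 + ⋯ + i_mx_m = 0}. -/
open scoped BigOperators

/-!
Firings at different sites commute, so the step relation has the diamond property and normal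
forms are unique; steps keep coordinates nonnegative, and they preserve `∑ i_j s_j` because
`i_{j-1} a_{j-1} = i_j b_j`. Read backwards along `l ↦ -l`, a step from a nonnegative vector is a
step of the same kind with `a` and `b` exchanged. Hence `ψ` is injective (the mirrored system has
unique normal forms, and they lie in `P`), and it is onto `Q` once the mirrored system is known to
terminate from every point of `Q`.

Termination is the least action principle: if firing each site `j` exactly `ν_j` times produces a
normal form, no legal sequence fires site `j` more than `ν_j` times. Such a `ν` exists because the
multiples `(ν_j + 1) i_j b_j` can be taken simultaneously within `η/2` of a common value, `η` being
the least gap `i_j (a_j - t_j)` (Dirichlet approximation, via recurrence in a compact torus).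
-/

theorem exists_pos_nsmul_norm_lt {G : Type*} [SeminormedAddCommGroup G] [CompactSpace G]
    (ξ : G) {δ : ℝ} (hδ : 0 < δ) : ∃ k : ℕ, 0 < k ∧ ‖k • ξ‖ < δ := by
  obtain ⟨a, φ, hφ, hlim⟩ := CompactSpace.tendsto_subseq fun n : ℕ => n • ξ
  obtain ⟨N, hN⟩ := Metric.tendsto_atTop.1 hlim (δ / 2) (half_pos hδ)
  refine ⟨φ (N + 1) - φ N, Nat.sub_pos_of_lt (hφ N.lt_succ_self), ?_⟩
  rw [sub_nsmul _ (hφ N.lt_succ_self).le, ← sub_eq_add_neg, ← dist_eq_norm]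
  have h₀ : dist (φ N • ξ) a < δ / 2 := hN N le_rfl
  have h₁ : dist (φ (N + 1) • ξ) a < δ / 2 := hN (N + 1) N.le_succ
  linarith [dist_triangle_right (φ (N + 1) • ξ) (φ N • ξ) a]

theorem exists_nat_mul_near_int_mul {ι : Type*} [Fintype ι] (C : ι → ℝ) (hC : ∀ J, 0 < C J)
    (R : ℝ) {η : ℝ} (hη : 0 < η) :
    ∃ k : ℕ, 0 < k ∧ ∀ J, ∃ μ : ℤ, |k * R - μ * C J| < η := by
  have : ∀ J, Fact (0 < C J) := fun J => ⟨hC J⟩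
  obtain ⟨k, hk, hnorm⟩ := exists_pos_nsmul_norm_lt (fun J => (R : AddCircle (C J))) hη
  refine ⟨k, hk, fun J => ⟨round ((C J)⁻¹ * (k * R)), ?_⟩⟩
  have hJ := (norm_le_pi_norm _ J).trans_lt hnorm
  rwa [Pi.smul_apply, ← AddCircle.coe_nsmul, AddCircle.norm_eq, nsmul_eq_mul] at hJ

namespace OHara

variable {m : ℕ}

def mirror {X : Type*} (v : Fin m → X) : Fin m → X := fun l => v (-l)

@[simp] theorem mirror_apply {X : Type*} (v : Fin m → X) (l : Fin m) : mirror v l = v (-l) := rfl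

@[simp] theorem mirror_mirror {X : Type*} (v : Fin m → X) : mirror (mirror v) = v := by
  funext l; simp

theorem mirror_injective {X : Type*} : Function.Injective (mirror : (Fin m → X) → Fin m → X) :=
  fun u v h => by rw [← mirror_mirror u, h, mirror_mirror]

variable [NeZero m] {α β : Fin m → ℝ} {s s' x y : Fin m → ℝ}

noncomputable def stepAt (α β : Fin m → ℝ) (j : Fin m) (s : Fin m → ℝ) : Fin m → ℝ :=
  fun l => s l + (if l = j - 1 then α (j - 1) else 0) - (if l = j then β j else 0)

theorem cStep_iff : CStep m α β s s' ↔ ∃ j, β j ≤ s j ∧ s' = stepAt α β j s :=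
  ⟨fun ⟨j, hj, h⟩ => ⟨j, hj, funext h⟩, fun ⟨j, hj, h⟩ => ⟨j, hj, fun l => by rw [h]; rfl⟩⟩

theorem stepAt_comm (j k : Fin m) (s : Fin m → ℝ) :
    stepAt α β j (stepAt α β k s) = stepAt α β k (stepAt α β j s) := by
  funext l; simp only [stepAt]; ring

theorem le_stepAt_of_ne (hα : ∀ j, 0 ≤ α j) {j k : Fin m} (hne : k ≠ j) (s : Fin m → ℝ) :
    s k ≤ stepAt α β j s k := by
  have := hα (j - 1)
  simp only [stepAt, if_neg hne]
  split_ifs <;> linarith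

def IsNormalForm (β s : Fin m → ℝ) : Prop := ∀ j, s j < β j

theorem IsNormalForm.eq_of_reflTransGen (hs : IsNormalForm β s)
    (h : Relation.ReflTransGen (CStep m α β) s s') : s' = s := by
  rcases h.cases_head with rfl | ⟨_, ⟨j, hj, -⟩, -⟩
  · rfl
  · exact absurd hj (hs j).not_ge

theorem cStep_diamond (hα : ∀ j, 0 ≤ α j) (s s₁ s₂ : Fin m → ℝ)
    (h₁ : CStep m α β s s₁) (h₂ : CStep m α β s s₂) :
    ∃ d, Relation.ReflGen (CStep m α β) s₁ d ∧ Relation.ReflTransGen (CStep m α β) s₂ d := by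
  obtain ⟨j, hj, rfl⟩ := cStep_iff.1 h₁
  obtain ⟨k, hk, rfl⟩ := cStep_iff.1 h₂
  by_cases hjk : j = k
  · subst hjk; exact ⟨_, .refl, .refl⟩
  refine ⟨stepAt α β k (stepAt α β j s), .single ?_, .single ?_⟩
  · exact cStep_iff.2 ⟨k, hk.trans (le_stepAt_of_ne hα (Ne.symm hjk) s), rfl⟩
  · exact cStep_iff.2 ⟨j, hj.trans (le_stepAt_of_ne hα hjk s), stepAt_comm k j s⟩

theorem eq_of_reflTransGen_isNormalForm (hα : ∀ j, 0 ≤ α j) {t s₁ s₂ : Fin m → ℝ}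
    (h₁ : Relation.ReflTransGen (CStep m α β) t s₁)
    (h₂ : Relation.ReflTransGen (CStep m α β) t s₂)
    (hs₁ : IsNormalForm β s₁) (hs₂ : IsNormalForm β s₂) : s₁ = s₂ := by
  obtain ⟨d, hd₁, hd₂⟩ := Relation.church_rosser (cStep_diamond hα) h₁ h₂
  rw [← hs₁.eq_of_reflTransGen hd₁, ← hs₂.eq_of_reflTransGen hd₂]

theorem CStep.nonneg (hα : ∀ j, 0 ≤ α j) (h : CStep m α β s s') (hs : ∀ l, 0 ≤ s l) :
    ∀ l, 0 ≤ s' l := by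
  obtain ⟨j, hj, rfl⟩ := cStep_iff.1 h
  intro l
  have := hα (j - 1)
  simp only [stepAt]
  split_ifs with h₁ h₂ h₂ <;> (try subst h₂) <;> linarith [hs l]

theorem nonneg_of_reflTransGen (hα : ∀ j, 0 ≤ α j)
    (h : Relation.ReflTransGen (CStep m α β) s s') (hs : ∀ l, 0 ≤ s l) : ∀ l, 0 ≤ s' l := by
  induction h with
  | refl => exact hs
  | tail _ hstep ih => exact CStep.nonneg hα hstep ih

theorem CStep.sum_mul_eq {w : Fin m → ℝ} (hwab : ∀ j, w j * α j = w (j + 1) * β (j + 1))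
    (h : CStep m α β s s') : ∑ l, w l * s' l = ∑ l, w l * s l := by
  obtain ⟨j, -, rfl⟩ := cStep_iff.1 h
  simp only [stepAt, mul_add, mul_sub, mul_ite, mul_zero, Finset.sum_add_distrib,
    Finset.sum_sub_distrib, Finset.sum_ite_eq', Finset.mem_univ, if_true]
  rw [hwab (j - 1), sub_add_cancel, add_sub_cancel_right]

theorem sum_mul_eq_of_reflTransGen {w : Fin m → ℝ}
    (hwab : ∀ j, w j * α j = w (j + 1) * β (j + 1))
    (h : Relation.ReflTransGen (CStep m α β) s s') : ∑ l, w l * s' l = ∑ l, w l * s l := by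
  induction h with
  | refl => rfl
  | tail _ hstep ih => rw [CStep.sum_mul_eq hwab hstep, ih]

theorem mirror_balance {w : Fin m → ℝ} (hwab : ∀ j, w j * α j = w (j + 1) * β (j + 1))
    (j : Fin m) :
    mirror w j * mirror β j = mirror w (j + 1) * mirror α (j + 1) := by
  have h := hwab (-(j + 1))
  rw [show -(j + 1) + 1 = -j by abel] at h
  simpa using h.symm

theorem CStep.mirror (hx : ∀ l, 0 ≤ x l) (h : CStep m α β x y) :
    CStep m (mirror β) (mirror α) (mirror y) (mirror x) := by
  obtain ⟨j, hj, rfl⟩ := cStep_iff.1 h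
  refine cStep_iff.2 ⟨1 - j, ?_, ?_⟩
  · simp only [mirror_apply, neg_sub, stepAt, ↓reduceIte]
    split_ifs with hjj
    · rw [hjj]; linarith
    · linarith [hx (j - 1)]
  · have e : (1 - j - 1 : Fin m) = -j := by abel
    funext l
    simp only [mirror_apply, stepAt, e, neg_neg, neg_sub, neg_eq_iff_eq_neg]
    split_ifs <;> ring

theorem reflTransGen_mirror (hα : ∀ j, 0 ≤ α j) (hx : ∀ l, 0 ≤ x l)
    (h : Relation.ReflTransGen (CStep m α β) x y) :
    Relation.ReflTransGen (CStep m (mirror β) (mirror α)) (mirror y) (mirror x) := by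
  induction h with
  | refl => exact .refl
  | tail hxy hstep ih => exact .head (CStep.mirror (nonneg_of_reflTransGen hα hxy hx) hstep) ih

noncomputable def fire (α β : Fin m → ℝ) (n : Fin m → ℕ) (x : Fin m → ℝ) : Fin m → ℝ :=
  fun l => x l + n (l + 1) * α l - n l * β l

@[simp] theorem fire_zero : fire α β 0 x = x := by
  funext l; simp [fire]

theorem stepAt_fire (j : Fin m) (n : Fin m → ℕ) :
    stepAt α β j (fire α β n x) = fire α β (n + Pi.single j 1) x := by
  funext l
  simp only [stepAt, fire, Pi.add_apply, Pi.single_apply, eq_sub_iff_add_eq]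
  by_cases h₁ : l + 1 = j
  · subst h₁
    by_cases h₂ : l = l + 1
    · simp only [↓reduceIte, if_pos h₂, add_sub_cancel_right]
      rw [← h₂]; push_cast; ring
    · simp only [↓reduceIte, if_neg h₂, add_sub_cancel_right]; push_cast; ring
  · by_cases h₂ : l = j
    · subst h₂; simp only [if_neg h₁, ↓reduceIte]; push_cast; ring
    · simp only [if_neg h₁, if_neg h₂]; push_cast; ring

theorem lt_of_le_of_le_fire (hα : ∀ j, 0 ≤ α j) {n ν : Fin m → ℕ}
    (hν : IsNormalForm β (fire α β ν x)) (hn : n ≤ ν) {j : Fin m} (hj : β j ≤ fire α β n x j) :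
    n j < ν j := by
  refine (hn j).lt_of_ne fun hnj => (hν j).not_ge (hj.trans ?_)
  have := hα j
  have : (n (j + 1) : ℝ) ≤ ν (j + 1) := by exact_mod_cast hn (j + 1)
  simp only [fire, hnj]
  gcongr

theorem exists_reflTransGen_isNormalForm_of_fire (hα : ∀ j, 0 ≤ α j) {ν : Fin m → ℕ}
    (hν : IsNormalForm β (fire α β ν x)) :
    ∃ y, Relation.ReflTransGen (CStep m α β) x y ∧ IsNormalForm β y := by
  suffices ∀ n ≤ ν,
      ∃ y, Relation.ReflTransGen (CStep m α β) (fire α β n x) y ∧ IsNormalForm β y by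
    simpa using this 0 fun _ => Nat.zero_le _
  intro n hn
  induction h : ∑ J, (ν J - n J) using Nat.strong_induction_on generalizing n with
  | _ d ih =>
  by_cases hnf : IsNormalForm β (fire α β n x)
  · exact ⟨_, .refl, hnf⟩
  obtain ⟨j, hj⟩ : ∃ j, β j ≤ fire α β n x j := by simpa [IsNormalForm] using hnf
  have hnj := lt_of_le_of_le_fire hα hν hn hj
  have hn' : n + Pi.single j 1 ≤ ν := by
    intro J
    by_cases hJ : J = j
    · subst hJ; simpa using hnj
    · simpa [Pi.single_apply, hJ] using hn J
  have hd : ∑ J, (ν J - (n + Pi.single j 1 : Fin m → ℕ) J) < d := by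
    rw [← h]
    refine Finset.sum_lt_sum (fun J _ => Nat.sub_le_sub_left (by simp) _)
      ⟨j, Finset.mem_univ _, ?_⟩
    simp only [Pi.add_apply, Pi.single_eq_same]
    omega
  obtain ⟨y, hy, hy'⟩ := ih _ hd _ hn' rfl
  exact ⟨y, .head (cStep_iff.2 ⟨j, hj, (stepAt_fire j n).symm⟩) hy, hy'⟩

theorem exists_isNormalForm_fire {w : Fin m → ℝ} (hw : ∀ j, 0 < w j) (hβ : ∀ j, 0 < β j)
    (hwab : ∀ j, w j * α j = w (j + 1) * β (j + 1)) (hx : ∀ j, x j < α j) :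
    ∃ ν, IsNormalForm β (fire α β ν x) := by
  set gap : Fin m → ℝ := fun j => w j * (α j - x j)
  set η := Finset.univ.inf' Finset.univ_nonempty gap
  have hgap : ∀ j, η ≤ gap j := fun j => Finset.inf'_le gap (Finset.mem_univ j)
  have hη : 0 < η := (Finset.lt_inf'_iff _).2 fun j _ => mul_pos (hw j) (sub_pos.2 (hx j))
  obtain ⟨k, hk, hμ⟩ := exists_nat_mul_near_int_mul (fun j => w j * β j)
    (fun j => mul_pos (hw j) (hβ j)) (η / 2) (half_pos hη)
  choose μ hμ using hμ
  have hT : η / 2 ≤ k * (η / 2) := le_mul_of_one_le_left (by positivity) (by exact_mod_cast hk)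
  have hμpos : ∀ j, 0 < μ j := by
    intro j
    have := (abs_lt.1 (hμ j)).2
    have : (0 : ℝ) < μ j * (w j * β j) := by linarith
    exact_mod_cast pos_of_mul_pos_left this (mul_pos (hw j) (hβ j)).le
  refine ⟨fun j => (μ j - 1).toNat, fun j => ?_⟩
  have hcast : ∀ j, ((μ j - 1).toNat : ℝ) = μ j - 1 := fun j => by
    rw [← Int.cast_natCast, Int.toNat_of_nonneg (by linarith [hμpos j]), Int.cast_sub,
      Int.cast_one]
  refine lt_of_mul_lt_mul_left ?_ (hw j).le
  have expand : w j * fire α β (fun j => (μ j - 1).toNat) x j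
      = w j * x j + (μ (j + 1) - 1) * (w j * α j) - (μ j - 1) * (w j * β j) := by
    simp only [fire, hcast]; ring
  rw [expand, hwab j]
  have := hgap j
  simp only [gap, mul_sub, hwab j] at this
  linarith [abs_lt.1 (hμ j), abs_lt.1 (hμ (j + 1))]

theorem exists_reflTransGen_isNormalForm {w : Fin m → ℝ} (hw : ∀ j, 0 < w j)
    (hα : ∀ j, 0 ≤ α j) (hβ : ∀ j, 0 < β j) (hwab : ∀ j, w j * α j = w (j + 1) * β (j + 1))
    (hx : ∀ j, x j < α j) :
    ∃ y, Relation.ReflTransGen (CStep m α β) x y ∧ IsNormalForm β y :=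
  let ⟨_, hν⟩ := exists_isNormalForm_fire hw hβ hwab hx
  exists_reflTransGen_isNormalForm_of_fire hα hν

end OHara

open OHara in
/-- the map `ψ`, sending `t ∈ P` to the normal form reachable
from `t`, is a bijection from `P = [0,a_1)×⋯×[0,a_m)` onto
`Q = [0,b_1)×⋯×[0,b_m)` and preserves the linear functional
`x ↦ Σ_j i_j·x_j`; i.e. `ψ(t) - t` lies in the hyperplane
`i_1x_1 + ⋯ + i_mx_m = 0`. -/
theorem ohara_bijection_functional {m : ℕ} [NeZero m] (i a b : Fin m → ℝ)
    (hi : ∀ j, 0 < i j) (ha : ∀ j, 0 < a j) (hb : ∀ j, 0 < b j)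
    (hiab : ∀ j, i j * a j = i (j + 1) * b (j + 1))
    (psi : (Fin m → ℝ) → (Fin m → ℝ))
    (hpsi : ∀ t, InBox a t →
      Relation.ReflTransGen (CStep m a b) t (psi t) ∧ ∀ j, psi t j < b j) :
    Set.BijOn psi {t | InBox a t} {s | InBox b s} ∧
    ∀ t, InBox a t → ∑ j, i j * psi t j = ∑ j, i j * t j := by
  have ha₀ : ∀ j, 0 ≤ a j := fun j => (ha j).le
  have hb₀ : ∀ j, 0 ≤ mirror b j := fun j => (hb (-j)).le
  have hback : ∀ t, InBox a t →
      Relation.ReflTransGen (CStep m (mirror b) (mirror a)) (mirror (psi t)) (mirror t) :=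
    fun t ht => reflTransGen_mirror ha₀ (fun l => (ht l).1) (hpsi t ht).1
  refine ⟨⟨fun t ht j => ⟨?_, (hpsi t ht).2 j⟩, fun t₁ ht₁ t₂ ht₂ h => ?_, fun s hs => ?_⟩,
    fun t ht => sum_mul_eq_of_reflTransGen hiab (hpsi t ht).1⟩
  · exact nonneg_of_reflTransGen ha₀ (hpsi t ht).1 (fun l => (ht l).1) j
  · have h₁ := hback t₁ ht₁
    rw [h] at h₁
    exact mirror_injective <| eq_of_reflTransGen_isNormalForm hb₀ h₁ (hback t₂ ht₂)
      (fun j => (ht₁ (-j)).2) (fun j => (ht₂ (-j)).2)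
  · obtain ⟨y, hsy, hy⟩ := exists_reflTransGen_isNormalForm (α := mirror b) (β := mirror a)
      (x := mirror s) (fun j => hi (-j)) hb₀ (fun j => ha (-j)) (mirror_balance hiab)
      (fun j => (hs (-j)).2)
    have hs₀ : ∀ l, 0 ≤ mirror s l := fun l => (hs (-l)).1
    have hys := reflTransGen_mirror hb₀ hs₀ hsy
    simp only [mirror_mirror] at hys
    have ht : InBox a (mirror y) := fun j =>
      ⟨nonneg_of_reflTransGen hb₀ hsy hs₀ (-j), by simpa using hy (-j)⟩
    exact ⟨mirror y, ht, eq_of_reflTransGen_isNormalForm ha₀ (hpsi _ ht).1 hys (hpsi _ ht).2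
      fun j => (hs j).2⟩
end

section
/- For all t, t' ∈ P with t + t' ∈ P, one has L(t + t') ≥ L(t) + L(t'). In particular, if t, t' ∈ P and t'_j ≤ t_j for all j, then L(t') ≤ L(t). -/
open scoped BigOperators

lemma ohara_dirichlet {m : ℕ} [NeZero m] (v : Fin m → ℝ) (hv : ∀ j, 0 < v j)
    {ε : ℝ} (hε : 0 < ε) :
    ∃ y : Fin m → ℕ, (∀ j, 1 ≤ y j) ∧ ∀ j j', v j * y j - v j' * y j' < ε := by
  classical
  obtain ⟨M, hM⟩ := exists_nat_gt
    (Finset.univ.sup' Finset.univ_nonempty (fun j => max (2 * v j / ε) (v j / v 0)))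
  have hMj : ∀ j, max (2 * v j / ε) (v j / v 0) < (M : ℝ) := fun j =>
    lt_of_le_of_lt (Finset.le_sup' (fun j => max (2 * v j / ε) (v j / v 0))
      (Finset.mem_univ j)) hM
  have hM0 : (0 : ℝ) < M := by
    have := hMj 0
    have h1 : (0:ℝ) < 2 * v 0 / ε := div_pos (by linarith [hv 0]) hε
    have := le_max_left (2 * v 0 / ε) (v 0 / v 0)
    linarith
  have hMpos : 0 < M := by exact_mod_cast hM0
  set θ : Fin m → ℝ := fun j => v 0 / v j with hθ
  have hθpos : ∀ j, 0 < θ j := fun j => div_pos (hv 0) (hv j)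
  have hcard : Fintype.card (Fin m → Fin M) < Fintype.card (Fin (M ^ m + 1)) := by
    simp [Fintype.card_fun]
  set g : Fin (M ^ m + 1) → (Fin m → Fin M) := fun k j =>
    ⟨(⌊(M : ℝ) * Int.fract ((k : ℕ) * θ j)⌋).toNat, by
      have h0 : (0:ℝ) ≤ (M : ℝ) * Int.fract ((k : ℕ) * θ j) :=
        mul_nonneg hM0.le (Int.fract_nonneg _)
      have h1 : (M : ℝ) * Int.fract ((k : ℕ) * θ j) < M := by
        nlinarith [Int.fract_lt_one ((k : ℕ) * θ j)]
      have h2 : ⌊(M : ℝ) * Int.fract ((k : ℕ) * θ j)⌋ < (M : ℤ) :=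
        Int.floor_lt.2 (by exact_mod_cast h1)
      have h3 : (0:ℤ) ≤ ⌊(M : ℝ) * Int.fract ((k : ℕ) * θ j)⌋ := Int.floor_nonneg.2 h0
      omega⟩ with hg
  have key : ∀ k₁ k₂ : Fin (M ^ m + 1), (k₁ : ℕ) < (k₂ : ℕ) → g k₁ = g k₂ →
      ∃ y : Fin m → ℕ, (∀ j, 1 ≤ y j) ∧ ∀ j j', v j * y j - v j' * y j' < ε := by
    intro k₁ k₂ hlt hgeq
    have hfract : ∀ j, |Int.fract ((k₂ : ℕ) * θ j) - Int.fract ((k₁ : ℕ) * θ j)| < 1 / M := by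
      intro j
      have h01 : (0:ℝ) ≤ (M : ℝ) * Int.fract ((k₁ : ℕ) * θ j) :=
        mul_nonneg hM0.le (Int.fract_nonneg _)
      have h02 : (0:ℝ) ≤ (M : ℝ) * Int.fract ((k₂ : ℕ) * θ j) :=
        mul_nonneg hM0.le (Int.fract_nonneg _)
      have hfl : ⌊(M : ℝ) * Int.fract ((k₂ : ℕ) * θ j)⌋ = ⌊(M : ℝ) * Int.fract ((k₁ : ℕ) * θ j)⌋ := by
        have := congrFun hgeq j
        have h4 := congrArg Fin.val this
        simp only [hg] at h4
        have n1 : (0:ℤ) ≤ ⌊(M : ℝ) * Int.fract ((k₁ : ℕ) * θ j)⌋ := Int.floor_nonneg.2 h01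
        have n2 : (0:ℤ) ≤ ⌊(M : ℝ) * Int.fract ((k₂ : ℕ) * θ j)⌋ := Int.floor_nonneg.2 h02
        omega
      have habs := Int.abs_sub_lt_one_of_floor_eq_floor hfl
      rw [lt_div_iff₀ hM0]
      have e1 : ((M:ℝ) * Int.fract ((k₂ : ℕ) * θ j) - (M : ℝ) * Int.fract ((k₁ : ℕ) * θ j))
          = (Int.fract ((k₂ : ℕ) * θ j) - Int.fract ((k₁ : ℕ) * θ j)) * M := by ring
      rw [e1, abs_mul, abs_of_pos hM0] at habs
      exact habs
    set q : ℕ := (k₂ : ℕ) - (k₁ : ℕ) with hqdef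
    have hq1 : 1 ≤ q := by omega
    have hqcast : (q : ℝ) = ((k₂ : ℕ) : ℝ) - ((k₁ : ℕ) : ℝ) := by
      rw [hqdef]; push_cast [Nat.cast_sub hlt.le]; ring
    set p : Fin m → ℤ := fun j => ⌊((k₂ : ℕ) : ℝ) * θ j⌋ - ⌊((k₁ : ℕ) : ℝ) * θ j⌋ with hp
    have hqp : ∀ j, |(q : ℝ) * θ j - p j| < 1 / M := by
      intro j
      have e1 : (q : ℝ) * θ j - p j
          = Int.fract ((k₂ : ℕ) * θ j) - Int.fract ((k₁ : ℕ) * θ j) := by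
        rw [hqcast, hp]
        unfold Int.fract
        push_cast
        ring
      rw [e1]; exact hfract j
    have hinvM : ∀ j, 1 / (M:ℝ) < θ j := by
      intro j
      have h5 : v j / v 0 < M := lt_of_le_of_lt (le_max_right _ _) (hMj j)
      rw [div_lt_iff₀ (hv 0)] at h5
      rw [hθ, div_lt_div_iff₀ hM0 (hv j)]
      linarith
    have hp1 : ∀ j, 1 ≤ p j := by
      intro j
      have h6 := hqp j
      rw [abs_lt] at h6
      have h7 : (1:ℝ) * θ j ≤ (q : ℝ) * θ j :=
        mul_le_mul_of_nonneg_right (by exact_mod_cast hq1) (hθpos j).le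
      have h8 : (0:ℝ) < p j := by
        have := hinvM j
        linarith
      exact_mod_cast h8
    refine ⟨fun j => (p j).toNat, ?_, ?_⟩
    · intro j
      have h20 := hp1 j
      show 1 ≤ (p j).toNat
      omega
    have hyc : ∀ j, (((p j).toNat : ℕ) : ℝ) = (p j : ℝ) := by
      intro j
      have h21 : ((p j).toNat : ℤ) = p j := Int.toNat_of_nonneg (by linarith [hp1 j])
      exact_mod_cast h21
    have hvθ : ∀ j, v j * θ j = v 0 := fun j => mul_div_cancel₀ _ (hv j).ne'
    have hbd : ∀ j, |v j * ((p j).toNat : ℕ) - v 0 * q| < ε / 2 := by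
      intro j
      have e2 : v j * ((p j).toNat : ℕ) - v 0 * q = v j * ((p j : ℝ) - (q : ℝ) * θ j) := by
        rw [hyc j, ← hvθ j]; ring
      rw [e2, abs_mul, abs_of_pos (hv j), abs_sub_comm]
      have h9 : v j * |(q : ℝ) * θ j - (p j : ℝ)| < v j * (1 / M) :=
        mul_lt_mul_of_pos_left (hqp j) (hv j)
      have h10 : v j * (1 / M) < ε / 2 := by
        have h11 : 2 * v j / ε < M := lt_of_le_of_lt (le_max_left _ _) (hMj j)
        rw [div_lt_iff₀ hε] at h11
        rw [mul_one_div, div_lt_iff₀ hM0]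
        nlinarith
      linarith
    intro j j'
    have h12 := hbd j
    have h13 := hbd j'
    rw [abs_lt] at h12 h13
    linarith
  obtain ⟨k₁, k₂, hne, hgeq⟩ := Fintype.exists_ne_map_eq_of_card_lt g hcard
  rcases lt_or_gt_of_ne (a := (k₁ : ℕ)) (b := (k₂ : ℕ)) (fun h => hne (Fin.val_injective h)) with hlt | hlt
  · exact key k₁ k₂ hlt hgeq
  · exact key k₂ k₁ hlt hgeq.symm

lemma ohara_quota {m : ℕ} [NeZero m] (i a b : Fin m → ℝ)
    (hi : ∀ j, 0 < i j) (ha : ∀ j, 0 < a j) (hb : ∀ j, 0 < b j)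
    (hiab : ∀ j, i j * a j = i (j + 1) * b (j + 1))
    (t : Fin m → ℝ) (ht : InBox a t) :
    ∃ n : Fin m → ℕ, ∀ j, t j + a j * n (j + 1) < b j * (n j + 1) := by
  classical
  have hvpos : ∀ j : Fin m, 0 < i j * b j := fun j => mul_pos (hi j) (hb j)
  have hεpos : 0 < Finset.univ.inf' Finset.univ_nonempty
      (fun j : Fin m => i (j+1) * b (j+1) - i j * t j) := by
    rw [Finset.lt_inf'_iff]
    intro j _
    have h1 := (ht j).2
    have h2 : i j * t j < i j * a j := mul_lt_mul_of_pos_left h1 (hi j)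
    rw [hiab j] at h2
    linarith
  obtain ⟨y, hy1, hy2⟩ := ohara_dirichlet (fun j => i j * b j) hvpos hεpos
  refine ⟨fun j => y j - 1, ?_⟩
  intro j
  have hcast : ∀ j' : Fin m, ((y j' - 1 : ℕ) : ℝ) = (y j' : ℝ) - 1 := fun j' => by
    have := hy1 j'
    push_cast [Nat.cast_sub this]
    ring
  have key : i j * (t j + a j * ((y (j+1) : ℝ) - 1)) < i j * (b j * (((y j : ℝ) - 1) + 1)) := by
    have h1 : (i (j+1) * b (j+1)) * y (j+1) - (i j * b j) * y j
        < Finset.univ.inf' Finset.univ_nonempty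
          (fun j : Fin m => i (j+1) * b (j+1) - i j * t j) := hy2 (j+1) j
    have h2 : Finset.univ.inf' Finset.univ_nonempty
          (fun j : Fin m => i (j+1) * b (j+1) - i j * t j)
        ≤ i (j+1) * b (j+1) - i j * t j := Finset.inf'_le _ (Finset.mem_univ j)
    have e1 : i j * (t j + a j * ((y (j+1) : ℝ) - 1))
        = i j * t j + (i j * a j) * (y (j+1) : ℝ) - i j * a j := by ring
    have e2 : i j * (b j * (((y j : ℝ) - 1) + 1)) = (i j * b j) * (y j : ℝ) := by ring
    rw [e1, e2, hiab j]
    linarith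
  have key2 := lt_of_mul_lt_mul_left key (hi j).le
  calc t j + a j * ((y (j+1) - 1 : ℕ) : ℝ) = t j + a j * ((y (j+1) : ℝ) - 1) := by rw [hcast]
    _ < b j * (((y j : ℝ) - 1) + 1) := key2
    _ = b j * (((y j - 1 : ℕ) : ℝ) + 1) := by rw [hcast]

lemma ohara_counts {m : ℕ} [NeZero m] (a b : Fin m → ℝ) (ha : ∀ j, 0 < a j)
    (t : Fin m → ℝ) (n : Fin m → ℕ)
    (hn : ∀ j, t j + a j * n (j + 1) < b j * (n j + 1))
    (s : ℕ → Fin m → ℝ) (k : ℕ) (h0 : s 0 = t)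
    (hs : ∀ l < k, CStep m a b (s l) (s (l + 1))) :
    ∀ l, l ≤ k → ∃ c : Fin m → ℕ, (∀ j, c j ≤ n j) ∧ (∑ j, c j) = l ∧
      ∀ j, s l j = t j + a j * c (j + 1) - b j * c j := by
  classical
  intro l
  induction l with
  | zero =>
    intro _
    exact ⟨fun _ => 0, fun j => Nat.zero_le _, by simp, by simp [h0]⟩
  | succ l ih =>
    intro hlk
    obtain ⟨c, hcn, hcs, hcf⟩ := ih (by omega)
    obtain ⟨j₀, hbj, heq⟩ := hs l (by omega)
    have hlt : c j₀ < n j₀ := by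
      by_contra hcon
      have hceq : c j₀ = n j₀ := le_antisymm (hcn j₀) (by omega)
      have h1 : s l j₀ ≤ t j₀ + a j₀ * n (j₀ + 1) - b j₀ * n j₀ := by
        rw [hcf j₀, hceq]
        have h3 : (c (j₀+1) : ℝ) ≤ (n (j₀+1) : ℝ) := by exact_mod_cast hcn (j₀+1)
        nlinarith [ha j₀]
      have h2 := hn j₀
      linarith
    refine ⟨Function.update c j₀ (c j₀ + 1), ?_, ?_, ?_⟩
    · intro j
      rw [Function.update_apply]
      split_ifs with hj
      · subst hj; omega
      · exact hcn j
    · rw [Finset.sum_update_of_mem (Finset.mem_univ j₀), ← Finset.erase_eq]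
      rw [← Finset.add_sum_erase _ c (Finset.mem_univ j₀)] at hcs
      omega
    · intro x
      rw [heq x, hcf x]
      have hupd1 : (Function.update c j₀ (c j₀ + 1) x : ℕ) = c x + if x = j₀ then 1 else 0 := by
        rw [Function.update_apply]
        split_ifs with hx
        · subst hx; rfl
        · rfl
      have hupd2 : (Function.update c j₀ (c j₀ + 1) (x + 1) : ℕ)
          = c (x + 1) + if x = j₀ - 1 then 1 else 0 := by
        rw [Function.update_apply]
        by_cases hx : x + 1 = j₀
        · rw [if_pos hx, if_pos (eq_sub_iff_add_eq.2 hx), hx]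
        · rw [if_neg hx, if_neg (fun h => hx (eq_sub_iff_add_eq.1 h))]
          omega
      rw [hupd1, hupd2]
      push_cast
      by_cases hx1 : x = j₀ - 1 <;> by_cases hx2 : x = j₀
      · simp only [if_pos hx1, if_pos hx2, congrArg a hx1.symm, congrArg b hx2.symm]
        ring
      · simp only [if_pos hx1, if_neg hx2, congrArg a hx1.symm]
        ring
      · simp only [if_neg hx1, if_pos hx2, congrArg b hx2.symm]
        ring
      · simp only [if_neg hx1, if_neg hx2]
        ring

lemma ohara_nonneg {m : ℕ} [NeZero m] (a b : Fin m → ℝ) (ha : ∀ j, 0 < a j)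
    (s : ℕ → Fin m → ℝ) (k : ℕ) (h0 : ∀ j, 0 ≤ s 0 j)
    (hs : ∀ l < k, CStep m a b (s l) (s (l + 1))) :
    ∀ l, l ≤ k → ∀ x, 0 ≤ s l x := by
  intro l
  induction l with
  | zero => intro _; exact h0
  | succ l ih =>
    intro hlk x
    obtain ⟨j₀, hbj, heq⟩ := hs l (by omega)
    have hprev := ih (by omega)
    rcases eq_or_ne x j₀ with hx | hx
    · have e1 : s (l+1) x = s l x + (if x = j₀ - 1 then a (j₀ - 1) else 0) - b j₀ := by
        rw [heq x, if_pos hx]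
      rw [e1]
      have h2 : b j₀ ≤ s l x := by rw [hx]; exact hbj
      split_ifs with h1
      · linarith [ha (j₀ - 1)]
      · linarith
    · have e1 : s (l+1) x = s l x + (if x = j₀ - 1 then a (j₀ - 1) else 0) - 0 := by
        rw [heq x, if_neg hx]
      rw [e1]
      split_ifs with h1
      · linarith [hprev x, ha (j₀ - 1)]
      · linarith [hprev x]

lemma ohara_shift {m : ℕ} [NeZero m] (a b : Fin m → ℝ) (w s s' : Fin m → ℝ)
    (hw : ∀ x, 0 ≤ w x) (h : CStep m a b s s') :
    CStep m a b (fun x => w x + s x) (fun x => w x + s' x) := by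
  obtain ⟨j, hj, he⟩ := h
  exact ⟨j, by have := hw j; simp only []; linarith, fun x => by simp only []; rw [he x]; ring⟩

lemma ohara_extend {m : ℕ} [NeZero m] (i a b : Fin m → ℝ)
    (hi : ∀ j, 0 < i j) (ha : ∀ j, 0 < a j) (hb : ∀ j, 0 < b j)
    (hiab : ∀ j, i j * a j = i (j + 1) * b (j + 1))
    (t : Fin m → ℝ) (ht : InBox a t) :
    ∀ (s : ℕ → Fin m → ℝ) (k : ℕ), s 0 = t →
      (∀ l < k, CStep m a b (s l) (s (l + 1))) →
      ∃ (s' : ℕ → Fin m → ℝ) (k' : ℕ), k ≤ k' ∧ s' 0 = t ∧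
        (∀ l < k', CStep m a b (s' l) (s' (l + 1))) ∧ (∀ j, s' k' j < b j) := by
  classical
  obtain ⟨n, hn⟩ := ohara_quota i a b hi ha hb hiab t ht
  -- auxiliary induction on fuel
  have aux : ∀ d : ℕ, ∀ (s : ℕ → Fin m → ℝ) (k : ℕ), s 0 = t →
      (∀ l < k, CStep m a b (s l) (s (l + 1))) → (∑ j, n j) ≤ k + d →
      ∃ (s' : ℕ → Fin m → ℝ) (k' : ℕ), k ≤ k' ∧ s' 0 = t ∧
        (∀ l < k', CStep m a b (s' l) (s' (l + 1))) ∧ (∀ j, s' k' j < b j) := by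
    intro d
    induction d with
    | zero =>
      intro s k h0 hs hfuel
      by_cases hnorm : ∀ j, s k j < b j
      · exact ⟨s, k, le_refl k, h0, hs, hnorm⟩
      · exfalso
        push_neg at hnorm
        obtain ⟨j₀, hj₀⟩ := hnorm
        -- build one more step and contradict the count bound
        set s₂ : ℕ → Fin m → ℝ := fun l =>
          if l ≤ k then s l else
            fun x => s k x + (if x = j₀ - 1 then a (j₀ - 1) else 0)
              - (if x = j₀ then b j₀ else 0) with hs₂
        have h20 : s₂ 0 = t := by simp [hs₂, Nat.zero_le k, h0]
        have h2s : ∀ l < k + 1, CStep m a b (s₂ l) (s₂ (l + 1)) := by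
          intro l hl
          rcases Nat.lt_or_ge l k with hlk | hlk
          · have e1 : s₂ l = s l := by simp [hs₂, hlk.le]
            have e2 : s₂ (l + 1) = s (l + 1) := by have h9 : l + 1 ≤ k := hlk; simp [hs₂, h9]
            rw [e1, e2]; exact hs l hlk
          · have hlk' : l = k := by omega
            subst hlk'
            have e1 : s₂ l = s l := by simp [hs₂]
            have e2 : s₂ (l + 1) = fun x => s l x + (if x = j₀ - 1 then a (j₀ - 1) else 0)
              - (if x = j₀ then b j₀ else 0) := by simp [hs₂]
            rw [e1, e2]
            exact ⟨j₀, hj₀, fun x => rfl⟩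
        obtain ⟨c, hcn, hcs, _⟩ := ohara_counts a b ha t n hn s₂ (k+1) h20 h2s (k+1) (le_refl _)
        have : (∑ j, c j) ≤ ∑ j, n j := Finset.sum_le_sum (fun j _ => hcn j)
        omega
    | succ d ihd =>
      intro s k h0 hs hfuel
      by_cases hnorm : ∀ j, s k j < b j
      · exact ⟨s, k, le_refl k, h0, hs, hnorm⟩
      · push_neg at hnorm
        obtain ⟨j₀, hj₀⟩ := hnorm
        set s₂ : ℕ → Fin m → ℝ := fun l =>
          if l ≤ k then s l else
            fun x => s k x + (if x = j₀ - 1 then a (j₀ - 1) else 0)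
              - (if x = j₀ then b j₀ else 0) with hs₂
        have h20 : s₂ 0 = t := by simp [hs₂, Nat.zero_le k, h0]
        have h2s : ∀ l < k + 1, CStep m a b (s₂ l) (s₂ (l + 1)) := by
          intro l hl
          rcases Nat.lt_or_ge l k with hlk | hlk
          · have e1 : s₂ l = s l := by simp [hs₂, hlk.le]
            have e2 : s₂ (l + 1) = s (l + 1) := by have h9 : l + 1 ≤ k := hlk; simp [hs₂, h9]
            rw [e1, e2]; exact hs l hlk
          · have hlk' : l = k := by omega
            subst hlk'
            have e1 : s₂ l = s l := by simp [hs₂]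
            have e2 : s₂ (l + 1) = fun x => s l x + (if x = j₀ - 1 then a (j₀ - 1) else 0)
              - (if x = j₀ then b j₀ else 0) := by simp [hs₂]
            rw [e1, e2]
            exact ⟨j₀, hj₀, fun x => rfl⟩
        obtain ⟨s', k', hk', h0', hs', hnorm'⟩ := ihd s₂ (k+1) h20 h2s (by omega)
        exact ⟨s', k', by omega, h0', hs', hnorm'⟩
  intro s k h0 hs
  exact aux (∑ j, n j) s k h0 hs (by omega)

/-- superadditivity of the number of steps `L`: if
`t, t', t + t' ∈ P` then `L(t + t') ≥ L(t) + L(t')`; in particular `L` is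
monotone: `t' ≤ t` (coordinatewise, with `t, t' ∈ P`) implies `L(t') ≤ L(t)`.
Here `L t` is the common length of all maximal rewrite sequences from `t`. -/
theorem ohara_superadditive {m : ℕ} [NeZero m] (i a b : Fin m → ℝ)
    (hi : ∀ j, 0 < i j) (ha : ∀ j, 0 < a j) (hb : ∀ j, 0 < b j)
    (hiab : ∀ j, i j * a j = i (j + 1) * b (j + 1))
    (L : (Fin m → ℝ) → ℕ)
    (hL : ∀ t, InBox a t → ∀ (s : ℕ → Fin m → ℝ) (k : ℕ), s 0 = t →
      (∀ l < k, CStep m a b (s l) (s (l + 1))) → (∀ j, s k j < b j) →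
      L t = k) :
    (∀ t t' : Fin m → ℝ, InBox a t → InBox a t' → InBox a (t + t') →
      L t + L t' ≤ L (t + t')) ∧
    (∀ t t' : Fin m → ℝ, InBox a t → InBox a t' → (∀ j, t' j ≤ t j) →
      L t' ≤ L t) := by
  classical
  have part1 : ∀ t t' : Fin m → ℝ, InBox a t → InBox a t' → InBox a (t + t') →
      L t + L t' ≤ L (t + t') := by
    intro t t' ht ht' htt'
    obtain ⟨s, k, -, h0, hsteps, hnorm⟩ :=
      ohara_extend i a b hi ha hb hiab t ht (fun _ => t) 0 rfl
        (fun l hl => absurd hl (Nat.not_lt_zero l))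
    obtain ⟨s', k', -, h0', hsteps', hnorm'⟩ :=
      ohara_extend i a b hi ha hb hiab t' ht' (fun _ => t') 0 rfl
        (fun l hl => absurd hl (Nat.not_lt_zero l))
    have hLt : L t = k := hL t ht s k h0 hsteps hnorm
    have hLt' : L t' = k' := hL t' ht' s' k' h0' hsteps' hnorm'
    have htnn : ∀ x, 0 ≤ t' x := fun x => (ht' x).1
    have hsknn : ∀ x, 0 ≤ s k x :=
      ohara_nonneg a b ha s k (by rw [h0]; exact fun j => (ht j).1) hsteps k (le_refl k)
    set S : ℕ → Fin m → ℝ := fun l => if l ≤ k then (fun x => t' x + s l x)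
        else (fun x => s k x + s' (l - k) x) with hS
    have hS0 : S 0 = t + t' := by
      funext x
      have e : S 0 x = t' x + s 0 x := by simp [hS, Nat.zero_le k]
      rw [e, h0, Pi.add_apply]
      ring
    have hSsteps : ∀ l < k + k', CStep m a b (S l) (S (l + 1)) := by
      intro l hl
      rcases Nat.lt_or_ge l k with hlk | hlk
      · have e1 : S l = fun x => t' x + s l x := by simp [hS, hlk.le]
        have e2 : S (l + 1) = fun x => t' x + s (l + 1) x := by
          have h9 : l + 1 ≤ k := hlk
          simp [hS, h9]
        rw [e1, e2]
        exact ohara_shift a b t' (s l) (s (l + 1)) htnn (hsteps l hlk)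
      · rcases Nat.eq_or_lt_of_le hlk with hek | hgt
        · -- l = k
          have hkl : l = k := hek.symm
          subst hkl
          have e1 : S l = fun x => s l x + s' 0 x := by
            funext x
            have e : S l x = t' x + s l x := by simp [hS]
            rw [e, congrFun h0' x]
            ring
          have e2 : S (l + 1) = fun x => s l x + s' 1 x := by
            have h9 : ¬ (l + 1 ≤ l) := by omega
            simp [hS, h9]
          rw [e1, e2]
          exact ohara_shift a b (s l) (s' 0) (s' 1) hsknn (hsteps' 0 (by omega))
        · -- k < l
          have e1 : S l = fun x => s k x + s' (l - k) x := by
            have h9 : ¬ (l ≤ k) := by omega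
            simp [hS, h9]
          have e2 : S (l + 1) = fun x => s k x + s' (l - k + 1) x := by
            have h9 : ¬ (l + 1 ≤ k) := by omega
            have h10 : l + 1 - k = l - k + 1 := by omega
            simp [hS, h9, h10]
          rw [e1, e2]
          exact ohara_shift a b (s k) (s' (l - k)) (s' (l - k + 1)) hsknn
            (hsteps' (l - k) (by omega))
    obtain ⟨S₂, K, hK, h20, h2s, h2n⟩ :=
      ohara_extend i a b hi ha hb hiab (t + t') htt' S (k + k') hS0 hSsteps
    have hfinal : L (t + t') = K := hL (t + t') htt' S₂ K h20 h2s h2n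
    omega
  refine ⟨part1, ?_⟩
  intro t t' ht ht' hle
  set t'' : Fin m → ℝ := fun j => t j - t' j with ht''def
  have ht'' : InBox a t'' := by
    intro j
    constructor
    · have := hle j
      simp [ht''def]
      linarith
    · have h1 := (ht j).2
      have h2 := (ht' j).1
      simp [ht''def]
      linarith
  have hsum : t'' + t' = t := by
    funext j
    simp [ht''def]
  have := part1 t'' t' ht'' ht' (by rw [hsum]; exact ht)
  rw [hsum] at this
  omega
end

section
/- Let t ∈ P, let s = ψ(t), and set ε_j = b_j − s_j (so ε_j > 0) for each j. Then for every t' ∈ P with t_j ≤ t'_j < t_j + ε_j for all j, one has ψ(t') − t' = ψ(t) − t and L(t') = L(t). -/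
/-!
A step at `j` only asks for `s_j ≥ b_j`, so adding a nonnegative vector to every term of a
rewrite sequence gives again a rewrite sequence. Shifting a maximal sequence from `t` by
`t' - t` therefore gives a rewrite sequence from `t'` of the same length, ending at
`ψ(t) + t' - t`, which is a normal form because `t'_j - t_j < ε_j`.

The substance is that a maximal sequence from `t ∈ P` exists at all. Firing each `j` exactly
`n_j` times turns `t` into `t_j + a_j n_{j+1} - b_j n_j`; if that vector is a normal form,
no rewrite sequence from `t` is longer than `∑ n_j` (least action principle). Such an `n`
exists: with `w_j = i_j b_j`, the balance `i_j a_j = w_{j+1}` reduces the requirement to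
finding positive integers `p_j = n_j + 1` whose multiples `w_j p_j` are all within
`min_j i_j (a_j - t_j)` of each other, a simultaneous Dirichlet approximation.
-/

open scoped BigOperators

theorem exists_nsmul_norm_lt {G : Type*} [SeminormedAddCommGroup G] [CompactSpace G]
    (x : G) {ε : ℝ} (hε : 0 < ε) :
    ∃ n : ℕ, 0 < n ∧ ‖n • x‖ < ε := by
  obtain ⟨_, φ, hφ, hlim⟩ := CompactSpace.tendsto_subseq fun n : ℕ => n • x
  obtain ⟨N, hN⟩ := Metric.cauchySeq_iff'.1 hlim.cauchySeq ε hε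
  refine ⟨φ (N + 1) - φ N, Nat.sub_pos_of_lt (hφ N.lt_succ_self), ?_⟩
  simpa [sub_nsmul x (hφ N.lt_succ_self).le, dist_eq_norm, sub_eq_add_neg]
    using hN (N + 1) N.le_succ

-- Simultaneous Dirichlet approximation, from the recurrence of `K ↦ K • (1, …, 1)` in the
-- compact torus `Π j, ℝ ⧸ w j ℤ`.
theorem exists_pos_nat_mul_near {ι : Type*} [Fintype ι] (w : ι → ℝ) (hw : ∀ j, 0 < w j)
    {η : ℝ} (hη : 0 < η) :
    ∃ p : ι → ℕ, (∀ j, 0 < p j) ∧ ∀ j j', w j * p j < w j' * p j' + η := by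
  have (j : ι) : Fact (0 < w j) := ⟨hw j⟩
  set ε := min (η / 2) 1
  have hε : 0 < ε := lt_min (half_pos hη) one_pos
  obtain ⟨K, hK, hKε⟩ := exists_nsmul_norm_lt (fun j => ((1 : ℝ) : AddCircle (w j))) hε
  have hclose : ∀ j, |K - round ((w j)⁻¹ * K) * w j| < ε := fun j => by
    have := (pi_norm_lt_iff hε).1 hKε j
    rwa [Pi.smul_apply, ← AddCircle.coe_nsmul, nsmul_one, AddCircle.norm_eq] at this
  have hround : ∀ j, 0 < round ((w j)⁻¹ * K) := fun j => by
    have h1 : (1 : ℝ) ≤ K := by exact_mod_cast hK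
    have h2 := (abs_lt.1 (hclose j)).2
    have h3 : ε ≤ 1 := min_le_right _ _
    have : (0 : ℝ) < round ((w j)⁻¹ * K) * w j := by linarith
    exact_mod_cast (pos_of_mul_pos_left this (hw j).le)
  refine ⟨fun j => (round ((w j)⁻¹ * K)).toNat, fun j => by simpa using hround j,
    fun j j' => ?_⟩
  have hcast (j : ι) :
      (((round ((w j)⁻¹ * K)).toNat : ℕ) : ℝ) = round ((w j)⁻¹ * K) := by
    exact_mod_cast Int.toNat_of_nonneg (hround j).le
  rw [hcast, hcast]
  have := abs_lt.1 (hclose j)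
  have := abs_lt.1 (hclose j')
  have : ε ≤ η / 2 := min_le_left _ _
  linarith

section RewriteSeq

variable {α : Type*} {r : α → α → Prop}

variable (r) in
def IsRewriteSeq (s : ℕ → α) (k : ℕ) : Prop :=
  ∀ l < k, r (s l) (s (l + 1))

theorem IsRewriteSeq.cons {x : α} {s : ℕ → α} {k : ℕ}
    (hx : r x (s 0)) (hs : IsRewriteSeq r s k) :
    IsRewriteSeq r (fun l => Nat.casesOn l x s) (k + 1) := by
  rintro (_ | l) hl
  · exact hx
  · exact hs l (by omega)

theorem IsRewriteSeq.tail {s : ℕ → α} {k : ℕ}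
    (hs : IsRewriteSeq r s (k + 1)) : IsRewriteSeq r (fun l => s (l + 1)) k :=
  fun l hl => hs (l + 1) (by omega)

variable (r) in
theorem exists_maximal_rewriteSeq (N : ℕ) (x : α)
    (hbound : ∀ s k, s 0 = x → IsRewriteSeq r s k → k ≤ N) :
    ∃ s k, s 0 = x ∧ IsRewriteSeq r s k ∧ ∀ y, ¬ r (s k) y := by
  induction N generalizing x with
  | zero =>
    refine ⟨fun _ => x, 0, rfl, fun l hl => absurd hl l.not_lt_zero, fun y hxy => ?_⟩
    have := hbound (fun l => Nat.casesOn l x fun _ => y) 1 rfl fun l hl => by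
      obtain rfl : l = 0 := by omega
      exact hxy
    omega
  | succ N ih =>
    by_cases hx : ∃ y, r x y
    · obtain ⟨y, hxy⟩ := hx
      obtain ⟨s, k, hs0, hs, hmax⟩ := ih y fun s' k' hs'0 hs' => by
        have := hbound _ (k' + 1) rfl (hs'.cons (hs'0 ▸ hxy))
        omega
      exact ⟨_, k + 1, rfl, hs.cons (hs0 ▸ hxy), hmax⟩
    · exact ⟨fun _ => x, 0, rfl, fun l hl => absurd hl l.not_lt_zero, not_exists.1 hx⟩

end RewriteSeq

section OHara

variable {m : ℕ} [NeZero m] {a b : Fin m → ℝ}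

theorem CStep.add_of_nonneg {s s' d : Fin m → ℝ} (h : CStep m a b s s')
    (hd : ∀ j, 0 ≤ d j) :
    CStep m a b (s + d) (s' + d) := by
  obtain ⟨j, hj, hs'⟩ := h
  refine ⟨j, by simpa using add_le_add hj (hd j), fun l => ?_⟩
  simp only [Pi.add_apply, hs']
  ring

theorem exists_cStep_of_le {s : Fin m → ℝ} {j : Fin m} (h : b j ≤ s j) :
    ∃ s', CStep m a b s s' :=
  ⟨_, j, h, fun _ => rfl⟩

-- The vector reached from `s` by firing each `j` exactly `n j` times, legal or not.
variable (a b) in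
def fire (n : Fin m → ℕ) (s : Fin m → ℝ) (j : Fin m) : ℝ :=
  s j + a j * n (j + 1) - b j * n j

theorem fire_add_single {s s' : Fin m → ℝ} {j : Fin m}
    (hs' : ∀ l, s' l = s l + (if l = j - 1 then a (j - 1) else 0) - (if l = j then b j else 0))
    (n : Fin m → ℕ) : fire a b n s' = fire a b (n + Pi.single j 1) s := by
  funext l
  have ha' : (if l = j - 1 then a (j - 1) else 0) = a l * (if l + 1 = j then 1 else 0) := by
    simp only [← eq_sub_iff_add_eq]
    split_ifs with h <;> simp [h]
  have hb' : (if l = j then b j else 0) = b l * (if l = j then 1 else 0) := by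
    split_ifs with h <;> simp [h]
  simp only [fire, hs', ha', hb', Pi.add_apply, Pi.single_apply]
  push_cast
  ring

-- Least action principle: a legal first step at `j` forces `n j > 0`, and after it the
-- remaining budget `n - Pi.single j 1` fires the next vector to the same normal form.
theorem length_le_sum_of_fire_lt (ha : ∀ j, 0 ≤ a j) {s : ℕ → Fin m → ℝ} {k : ℕ}
    {n : Fin m → ℕ} (hn : ∀ j, fire a b n (s 0) j < b j)
    (hs : IsRewriteSeq (CStep m a b) s k) : k ≤ ∑ j, n j := by
  induction k generalizing s n with
  | zero => exact Nat.zero_le _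
  | succ k ih =>
    obtain ⟨j, hj, hs1⟩ := hs 0 k.succ_pos
    have hnj : 0 < n j := by
      by_contra! h0
      have := hn j
      simp only [fire, Nat.le_zero.1 h0, Nat.cast_zero, mul_zero, sub_zero] at this
      nlinarith [ha j, (n (j + 1)).cast_nonneg (α := ℝ)]
    obtain ⟨n', rfl⟩ : ∃ n', n = n' + Pi.single j 1 := ⟨n - Pi.single j 1, by
      funext l; by_cases hl : l = j <;> simp [hl]; omega⟩
    have := ih (s := fun l => s (l + 1)) (by rwa [fire_add_single hs1]) hs.tail
    simp only [Pi.add_apply, Finset.sum_add_distrib, Finset.sum_pi_single', Finset.mem_univ,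
      if_true]
    omega

theorem exists_fire_lt (i : Fin m → ℝ) (hi : ∀ j, 0 < i j) (ha : ∀ j, 0 < a j)
    (hiab : ∀ j, i j * a j = i (j + 1) * b (j + 1)) {t : Fin m → ℝ} (ht : InBox a t) :
    ∃ n, ∀ j, fire a b n t j < b j := by
  set η := Finset.univ.inf' Finset.univ_nonempty fun j => i j * (a j - t j)
  have hη : 0 < η := (Finset.lt_inf'_iff _).2 fun j _ => mul_pos (hi j) (sub_pos.2 (ht j).2)
  have hw : ∀ j, 0 < i j * b j := fun j => by
    simpa [hiab] using mul_pos (hi (j - 1)) (ha (j - 1))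
  obtain ⟨p, hp, hnear⟩ := exists_pos_nat_mul_near (fun j => i j * b j) hw hη
  refine ⟨fun j => p j - 1, fun j => ?_⟩
  have hnear := hnear (j + 1) j
  have hηj : η ≤ i j * (a j - t j) := Finset.inf'_le _ (Finset.mem_univ j)
  have key : i j * fire a b (fun j => p j - 1) t j < i j * b j := by
    simp only [fire, Nat.cast_pred (hp _)]
    nlinarith [hiab j]
  exact lt_of_mul_lt_mul_left key (hi j).le

theorem exists_rewriteSeq_normalForm (i : Fin m → ℝ) (hi : ∀ j, 0 < i j) (ha : ∀ j, 0 < a j)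
    (hiab : ∀ j, i j * a j = i (j + 1) * b (j + 1)) {t : Fin m → ℝ} (ht : InBox a t) :
    ∃ s k, s 0 = t ∧ IsRewriteSeq (CStep m a b) s k ∧ ∀ j, s k j < b j := by
  obtain ⟨n, hn⟩ := exists_fire_lt i hi ha hiab ht
  obtain ⟨s, k, hs0, hs, hmax⟩ := exists_maximal_rewriteSeq (CStep m a b) (∑ j, n j) t
    fun s k hs0 hs => length_le_sum_of_fire_lt (fun j => (ha j).le) (hs0 ▸ hn) hs
  exact ⟨s, k, hs0, hs, fun j => not_le.1 fun h => (exists_cStep_of_le h).elim hmax⟩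

end OHara

theorem ohara_local_constancy_general {m : ℕ} [NeZero m] (i a b : Fin m → ℝ)
    (hi : ∀ j, 0 < i j) (ha : ∀ j, 0 < a j)
    (hiab : ∀ j, i j * a j = i (j + 1) * b (j + 1))
    (psi : (Fin m → ℝ) → (Fin m → ℝ)) (L : (Fin m → ℝ) → ℕ)
    (hpsiL : ∀ t, InBox a t → ∀ (s : ℕ → Fin m → ℝ) (k : ℕ), s 0 = t →
      (∀ l < k, CStep m a b (s l) (s (l + 1))) → (∀ j, s k j < b j) →
      psi t = s k ∧ L t = k)
    (t : Fin m → ℝ) (ht : InBox a t)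
    (t' : Fin m → ℝ) (ht' : InBox a t')
    (htt' : ∀ j, t j ≤ t' j ∧ t' j < t j + (b j - psi t j)) :
    (∀ j, psi t' j - t' j = psi t j - t j) ∧ L t' = L t := by
  obtain ⟨s, k, hs0, hs, hnf⟩ := exists_rewriteSeq_normalForm i hi ha hiab ht
  obtain ⟨hpsi, hL⟩ := hpsiL t ht s k hs0 hs hnf
  have hshift : IsRewriteSeq (CStep m a b) (fun l => s l + (t' - t)) k := fun l hl =>
    (hs l hl).add_of_nonneg fun j => sub_nonneg.2 (htt' j).1
  have hnf' : ∀ j, s k j + (t' j - t j) < b j := fun j => by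
    have := (htt' j).2
    rw [hpsi] at this
    linarith
  obtain ⟨hpsi', hL'⟩ := hpsiL t' ht' _ k (by simp [hs0]) hshift hnf'
  refine ⟨fun j => ?_, hL'.trans hL.symm⟩
  rw [hpsi', hpsi, Pi.add_apply, Pi.sub_apply]
  ring

/-- local constancy of `t ↦ ψ(t) - t` and of `L`: if `s = ψ(t)`,
`ε_j = b_j - s_j`, and `t' ∈ P` satisfies `t_j ≤ t'_j < t_j + ε_j` for all
`j`, then `ψ(t') - t' = ψ(t) - t` and `L(t') = L(t)`.  Here `ψ t` and `L t`
are the common end and length of all maximal rewrite sequences from `t`. -/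
theorem ohara_local_constancy {m : ℕ} [NeZero m] (i a b : Fin m → ℝ)
    (hi : ∀ j, 0 < i j) (ha : ∀ j, 0 < a j) (hb : ∀ j, 0 < b j)
    (hiab : ∀ j, i j * a j = i (j + 1) * b (j + 1))
    (psi : (Fin m → ℝ) → (Fin m → ℝ)) (L : (Fin m → ℝ) → ℕ)
    (hpsiL : ∀ t, InBox a t → ∀ (s : ℕ → Fin m → ℝ) (k : ℕ), s 0 = t →
      (∀ l < k, CStep m a b (s l) (s (l + 1))) → (∀ j, s k j < b j) →
      psi t = s k ∧ L t = k)
    (t : Fin m → ℝ) (ht : InBox a t)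
    (t' : Fin m → ℝ) (ht' : InBox a t')
    (htt' : ∀ j, t j ≤ t' j ∧ t' j < t j + (b j - psi t j)) :
    (∀ j, psi t' j - t' j = psi t j - t j) ∧ L t' = L t :=
  ohara_local_constancy_general i a b hi ha hiab psi L hpsiL t ht t' ht' htt'
end

section
/- Assume additionally that a_1,…,a_m and b_1,…,b_m are positive integers. For j = 1,…,m set c_j = a_1·a_2⋯a_{j−1}·b_j·b_{j+1}⋯b_{m−1} (empty products equal 1), and let N = lcm(c_1,…,c_m). Then the maximum of L(t) over all t ∈ P equals N·(1/c_1 + 1/c_2 + ⋯ + 1/c_m) − m, and this maximum is attained at t = (a_1 − 1, a_2 − 1, …, a_m − 1). -/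
/-!
Record a run by the numbers `n j` of steps taken at each index. With `N = lcm c` and
`q j = N / c j` one has `q (j+1) * a j = q j * b j`, because `a j * c j = b j * c (j+1)` (the two
products differ only in the factor at `j`, and `∏ a = ∏ b` follows from the balance condition on
`i`). Starting inside `P`, a step at `j` needs
`(n j + 1) b j ≤ t j + n (j+1) a j < (n (j+1) + 1) a j ≤ q (j+1) a j = q j b j`, so it never pushes
`n j` up to `q j`: every run has `n j < q j`, which bounds its length by `∑ q j - m = N ∑ 1/c j - m`
and makes the process terminate. From `t = a - 1` a normal form forces
`(n (j+1) + 1) a j ≤ (n j + 1) b j`, i.e. the weights `(n j + 1) c j` decrease cyclically, so they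
are all equal; being a common multiple of the `c j` they are at least `N`, whence `n j = q j - 1`.
-/

open scoped BigOperators

/-- `c_j = a_1·a_2⋯a_{j-1} · b_j·b_{j+1}⋯b_{m-1}` (1-based subscripts;
here `Fin m` is 0-based, so the first factor runs over indices `< j` and the
second over indices `u` with `j ≤ u < m - 1`; empty products equal `1`). -/
def cProd (m : ℕ) (A B : Fin m → ℕ) (j : Fin m) : ℕ :=
  (∏ u ∈ Finset.univ.filter (fun u : Fin m => (u : ℕ) < (j : ℕ)), A u) *
  (∏ u ∈ Finset.univ.filter
      (fun u : Fin m => (j : ℕ) ≤ (u : ℕ) ∧ (u : ℕ) < m - 1), B u)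

theorem WellFounded.exists_chain_to_normalForm {α : Type*} {r : α → α → Prop}
    (hr : WellFounded (flip r)) (x : α) :
    ∃ (s : ℕ → α) (ℓ : ℕ), s 0 = x ∧ (∀ l < ℓ, r (s l) (s (l + 1))) ∧ ∀ y, ¬ r (s ℓ) y := by
  induction x using hr.induction with
  | _ x ih =>
  by_cases hx : ∃ y, r x y
  · obtain ⟨y, hxy⟩ := hx
    obtain ⟨s, ℓ, hs0, hs, hend⟩ := ih y hxy
    refine ⟨fun l => Nat.casesOn l x s, ℓ + 1, rfl, ?_, hend⟩
    rintro (_ | l) hl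
    · simpa [hs0] using hxy
    · exact hs l (by omega)
  · push Not at hx
    exact ⟨fun _ => x, 0, rfl, by simp, hx⟩

theorem prod_eq_prod_of_mul_eq_mul_succ {m : ℕ} [NeZero m] {M : Type*}
    [CommRing M] [IsDomain M] {i a b : Fin m → M} (hi : ∀ j, i j ≠ 0)
    (h : ∀ j, i j * a j = i (j + 1) * b (j + 1)) : ∏ j, a j = ∏ j, b j := by
  have hshift : ∏ j, i (j + 1) * b (j + 1) = ∏ j, i j * b j :=
    Equiv.prod_comp (Equiv.addRight 1) fun j => i j * b j
  have hprod : (∏ j, i j) * ∏ j, a j = (∏ j, i j) * ∏ j, b j := by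
    rw [← Finset.prod_mul_distrib, ← Finset.prod_mul_distrib, ← hshift]
    exact Finset.prod_congr rfl fun j _ => h j
  exact mul_left_cancel₀ (Finset.prod_ne_zero_iff.mpr fun j _ => hi j) hprod

open Fin.NatCast in
theorem Fin.eq_of_forall_succ_le {m : ℕ} [NeZero m] {β : Type*} [PartialOrder β]
    {f : Fin m → β} (h : ∀ j, f (j + 1) ≤ f j) (i j : Fin m) : f i = f j := by
  have hle : ∀ (j : Fin m) (k : ℕ), f (j + k) ≤ f j := by
    intro j k
    induction k with
    | zero => simp
    | succ k ih => rw [Nat.cast_succ, ← add_assoc]; exact (h _).trans ih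
  have hshift : ∀ i j : Fin m, i = j + ((i - j : Fin m) : ℕ) := fun i j => by
    rw [Fin.cast_val_eq_self, add_sub_cancel]
  exact le_antisymm (hshift i j ▸ hle j _) (hshift j i ▸ hle i _)

theorem Fin.val_add_one_eq_ite {m : ℕ} [NeZero m] (j : Fin m) :
    ((j + 1 : Fin m) : ℕ) = if (j : ℕ) + 1 = m then 0 else (j : ℕ) + 1 := by
  obtain ⟨n, rfl⟩ := Nat.exists_eq_add_one_of_ne_zero (NeZero.ne m)
  rcases eq_or_ne j (Fin.last n) with rfl | hj
  · simp
  · rw [Fin.val_add_one_of_lt (Fin.lt_last_iff_ne_last.mpr hj), if_neg]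
    exact fun h => hj (Fin.ext (by simp only [Fin.val_last]; omega))

section cProd

variable {m : ℕ} (A B : Fin m → ℕ)

theorem cProd_eq_prod_ite (j : Fin m) :
    cProd m A B j =
      ∏ u : Fin m, if (u : ℕ) < j then A u else if (u : ℕ) < m - 1 then B u else 1 := by
  rw [cProd, Finset.prod_filter, Finset.prod_filter, ← Finset.prod_mul_distrib]
  refine Finset.prod_congr rfl fun u _ => ?_
  split_ifs <;> omega

theorem cProd_pos (hA : ∀ j, 0 < A j) (hB : ∀ j, 0 < B j) (j : Fin m) : 0 < cProd m A B j :=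
  Nat.mul_pos (Finset.prod_pos fun u _ => hA u) (Finset.prod_pos fun u _ => hB u)

theorem lcm_cProd_pos (hA : ∀ j, 0 < A j) (hB : ∀ j, 0 < B j) :
    0 < Finset.univ.lcm (cProd m A B) :=
  Nat.pos_of_ne_zero fun h => by
    obtain ⟨j, -, hj⟩ := Finset.lcm_eq_zero_iff.mp h
    exact (cProd_pos A B hA hB j).ne' hj

theorem mul_cProd_eq_mul_cProd_succ [NeZero m] (hprod : ∏ j, A j = ∏ j, B j) (j : Fin m) :
    A j * cProd m A B j = B j * cProd m A B (j + 1) := by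
  have hj := j.isLt
  rw [cProd_eq_prod_ite, cProd_eq_prod_ite, ← Finset.mul_prod_erase _ _ (Finset.mem_univ j),
    ← Finset.mul_prod_erase _ _ (Finset.mem_univ j), Fin.val_add_one_eq_ite j]
  by_cases hlast : (j : ℕ) + 1 = m
  · have hlt : ∀ u ∈ Finset.univ.erase j, (u : ℕ) < j ∧ (u : ℕ) < m - 1 := fun u hu => by
      have := Fin.val_ne_of_ne (Finset.ne_of_mem_erase hu); omega
    simp only [hlast, if_true, lt_irrefl, if_false, show ¬(j : ℕ) < m - 1 by omega,
      Nat.not_lt_zero, one_mul]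
    rw [Finset.prod_congr rfl fun u hu => if_pos (hlt u hu).1,
      Finset.prod_congr rfl fun u hu => if_pos (hlt u hu).2,
      Finset.mul_prod_erase _ _ (Finset.mem_univ j), Finset.mul_prod_erase _ _ (Finset.mem_univ j),
      hprod]
  · simp only [hlast, if_false, lt_irrefl, lt_add_one, if_true, show (j : ℕ) < m - 1 by omega]
    rw [Finset.prod_congr rfl fun u hu => ?_]
    · ring
    · have hu : (u : ℕ) ≠ j := Fin.val_ne_of_ne (Finset.ne_of_mem_erase hu)
      simp only [show (u : ℕ) < j ↔ (u : ℕ) < j + 1 by omega]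

end cProd

namespace OHara

section

variable {m : ℕ} (A B : Fin m → ℕ)

def maxCount (j : Fin m) : ℕ :=
  Finset.univ.lcm (cProd m A B) / cProd m A B j

theorem maxCount_mul_cProd (j : Fin m) :
    maxCount A B j * cProd m A B j = Finset.univ.lcm (cProd m A B) :=
  Nat.div_mul_cancel (Finset.dvd_lcm (Finset.mem_univ j))

theorem maxCount_pos (hA : ∀ j, 0 < A j) (hB : ∀ j, 0 < B j) (j : Fin m) :
    0 < maxCount A B j :=
  Nat.pos_of_mul_pos_right ((maxCount_mul_cProd A B j).symm ▸ lcm_cProd_pos A B hA hB)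

theorem maxCount_succ_mul [NeZero m] (hA : ∀ j, 0 < A j) (hB : ∀ j, 0 < B j)
    (hprod : ∏ j, A j = ∏ j, B j) (j : Fin m) :
    maxCount A B (j + 1) * A j = maxCount A B j * B j := by
  refine Nat.eq_of_mul_eq_mul_right (cProd_pos A B hA hB j) ?_
  calc maxCount A B (j + 1) * A j * cProd m A B j
      = B j * (maxCount A B (j + 1) * cProd m A B (j + 1)) := by
        rw [mul_assoc, mul_cProd_eq_mul_cProd_succ A B hprod]; ring
    _ = maxCount A B j * B j * cProd m A B j := by
        rw [maxCount_mul_cProd, ← maxCount_mul_cProd A B j]; ring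

theorem lcm_mul_sum_inv_cProd (hA : ∀ j, 0 < A j) (hB : ∀ j, 0 < B j) :
    ((Finset.univ.lcm (cProd m A B) : ℕ) : ℝ) * ∑ j, (cProd m A B j : ℝ)⁻¹ =
      ∑ j, (maxCount A B j : ℝ) := by
  rw [Finset.mul_sum]
  refine Finset.sum_congr rfl fun j _ => ?_
  have hc : (cProd m A B j : ℝ) ≠ 0 := by exact_mod_cast (cProd_pos A B hA hB j).ne'
  rw [← maxCount_mul_cProd A B j, Nat.cast_mul, mul_inv_cancel_right₀ hc]

end

variable {m : ℕ} [NeZero m] (A B : Fin m → ℕ) (t : Fin m → ℝ)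

/-- The point reached from `t` after `n j` steps at each index `j`, in any order. -/
def state (n : Fin m → ℕ) (j : Fin m) : ℝ :=
  t j + n (j + 1) * A j - n j * B j

def CountStep (n n' : Fin m → ℕ) : Prop :=
  ∃ j, (B j : ℝ) ≤ state A B t n j ∧ n' = n + Pi.single j 1

variable {A B t}

theorem CountStep.cStep {n n' : Fin m → ℕ} (h : CountStep A B t n n') :
    CStep m (fun j => (A j : ℝ)) (fun j => (B j : ℝ)) (state A B t n) (state A B t n') := by
  obtain ⟨j, hj, rfl⟩ := h
  refine ⟨j, hj, fun l => ?_⟩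
  have hadd : (if l = j - 1 then (A (j - 1) : ℝ) else 0) = if l + 1 = j then (A l : ℝ) else 0 := by
    by_cases h : l + 1 = j
    · subst h; simp
    · rw [if_neg h, if_neg (mt eq_sub_iff_add_eq.mp h)]
  have hsub : (if l = j then (B j : ℝ) else 0) = if l = j then (B l : ℝ) else 0 := by
    by_cases h : l = j
    · subst h; rfl
    · rw [if_neg h, if_neg h]
  simp only [hadd, hsub, state, Pi.add_apply, Pi.single_apply]
  split_ifs <;> push_cast <;> ring

theorem CountStep.sum_eq {n n' : Fin m → ℕ} (h : CountStep A B t n n') :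
    ∑ j, n' j = ∑ j, n j + 1 := by
  obtain ⟨j, -, rfl⟩ := h
  simp [Finset.sum_add_distrib]

theorem succ_lt_maxCount_of_le_state (hA : ∀ j, 0 < A j) (hB : ∀ j, 0 < B j)
    (hprod : ∏ j, A j = ∏ j, B j) (ht : ∀ j, t j < A j) {n : Fin m → ℕ}
    (hn : ∀ j, n j < maxCount A B j) {j : Fin m} (hj : (B j : ℝ) ≤ state A B t n j) :
    n j + 1 < maxCount A B j := by
  have hq : (maxCount A B (j + 1) : ℝ) * A j = maxCount A B j * B j := by
    exact_mod_cast maxCount_succ_mul A B hA hB hprod j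
  have hn' : (n (j + 1) : ℝ) + 1 ≤ maxCount A B (j + 1) := by exact_mod_cast hn (j + 1)
  have hlt : ((n j : ℝ) + 1) * B j < maxCount A B j * B j :=
    calc ((n j : ℝ) + 1) * B j ≤ t j + n (j + 1) * A j := by rw [state] at hj; linarith
      _ < (n (j + 1) + 1) * A j := by linarith [ht j]
      _ ≤ maxCount A B (j + 1) * A j := by gcongr
      _ = maxCount A B j * B j := hq
  exact_mod_cast lt_of_mul_lt_mul_right hlt (Nat.cast_nonneg (B j))

theorem CountStep.lt_maxCount (hA : ∀ j, 0 < A j) (hB : ∀ j, 0 < B j)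
    (hprod : ∏ j, A j = ∏ j, B j) (ht : ∀ j, t j < A j) {n n' : Fin m → ℕ}
    (hn : ∀ j, n j < maxCount A B j) (h : CountStep A B t n n') (l : Fin m) :
    n' l < maxCount A B l := by
  obtain ⟨j, hj, rfl⟩ := h
  rcases eq_or_ne l j with rfl | hlj
  · simpa using succ_lt_maxCount_of_le_state hA hB hprod ht hn hj
  · simpa [hlj] using hn l

variable (A B t) in
theorem wellFounded_countStep :
    WellFounded (flip fun n n' : {n : Fin m → ℕ // ∀ j, n j < maxCount A B j} =>
      CountStep A B t n n') := by
  refine Subrelation.wf (fun {n' n} h => ?_)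
    (measure fun n : {n : Fin m → ℕ // ∀ j, n j < maxCount A B j} =>
      ∑ j, maxCount A B j - ∑ j, n.1 j).wf
  have hle : ∑ j, n'.1 j ≤ ∑ j, maxCount A B j :=
    Finset.sum_le_sum fun j _ => (n'.2 j).le
  have hsum := CountStep.sum_eq h
  show ∑ j, maxCount A B j - ∑ j, n'.1 j < ∑ j, maxCount A B j - ∑ j, n.1 j
  omega

theorem exists_maximal_run (hA : ∀ j, 0 < A j) (hB : ∀ j, 0 < B j)
    (hprod : ∏ j, A j = ∏ j, B j) (ht : InBox (fun j => (A j : ℝ)) t) :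
    ∃ n : Fin m → ℕ, (∀ j, n j < maxCount A B j) ∧ (∀ j, state A B t n j < B j) ∧
      ∃ s : ℕ → Fin m → ℝ, s 0 = t ∧
        (∀ l < ∑ j, n j, CStep m (fun j => (A j : ℝ)) (fun j => (B j : ℝ)) (s l) (s (l + 1))) ∧
        s (∑ j, n j) = state A B t n := by
  obtain ⟨κ, ℓ, hκ0, hκ, hend⟩ :=
    (wellFounded_countStep A B t).exists_chain_to_normalForm ⟨0, maxCount_pos A B hA hB⟩
  have hsum : ∀ l ≤ ℓ, ∑ j, (κ l).1 j = l := by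
    intro l
    induction l with
    | zero => simp [hκ0]
    | succ l ih => intro hl; rw [(hκ l hl).sum_eq, ih (Nat.le_of_succ_le hl)]
  refine ⟨(κ ℓ).1, (κ ℓ).2, fun j => ?_, fun l => state A B t (κ l).1, ?_, ?_, ?_⟩
  · by_contra! hj
    have hstep : CountStep A B t (κ ℓ).1 ((κ ℓ).1 + Pi.single j 1) := ⟨j, hj, rfl⟩
    exact hend ⟨_, hstep.lt_maxCount hA hB hprod (fun j => (ht j).2) (κ ℓ).2⟩ hstep
  · funext j
    simp [hκ0, state]
  · rw [hsum ℓ le_rfl]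
    exact fun l hl => (hκ l hl).cStep
  · rw [hsum ℓ le_rfl]

theorem maxCount_le_succ_of_normal (hA : ∀ j, 0 < A j) (hB : ∀ j, 0 < B j)
    (hprod : ∏ j, A j = ∏ j, B j) {n : Fin m → ℕ}
    (hn : ∀ j, state A B (fun j => (A j : ℝ) - 1) n j < B j) (j : Fin m) :
    maxCount A B j ≤ n j + 1 := by
  have hnormal : ∀ u, (n (u + 1) + 1) * A u ≤ (n u + 1) * B u := by
    intro u
    have hreal : ((n (u + 1) : ℝ) + 1) * A u < (n u + 1) * B u + 1 := by
      have := hn u; rw [state] at this; linarith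
    have : (n (u + 1) + 1) * A u < (n u + 1) * B u + 1 := by exact_mod_cast hreal
    omega
  let w u := (n u + 1) * cProd m A B u
  have hw : ∀ u, w (u + 1) ≤ w u := by
    intro u
    refine Nat.le_of_mul_le_mul_right ?_ (hB u)
    calc w (u + 1) * B u = (n (u + 1) + 1) * (A u * cProd m A B u) := by
          rw [mul_cProd_eq_mul_cProd_succ A B hprod]; ring
      _ ≤ (n u + 1) * B u * cProd m A B u := by
          rw [← mul_assoc]; exact Nat.mul_le_mul_right _ (hnormal u)
      _ = w u * B u := by ring
  have hdvd : Finset.univ.lcm (cProd m A B) ∣ w j :=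
    Finset.lcm_dvd fun u _ => Fin.eq_of_forall_succ_le hw u j ▸ Dvd.intro_left _ rfl
  have hle := Nat.le_of_dvd (Nat.mul_pos (Nat.succ_pos _) (cProd_pos A B hA hB j)) hdvd
  rw [← maxCount_mul_cProd A B j] at hle
  exact Nat.le_of_mul_le_mul_right hle (cProd_pos A B hA hB j)

end OHara

/-- when all `a_j, b_j` are positive integers, the maximum of
`L(t)` over `t ∈ P` equals `lcm(c_1,…,c_m)·(1/c_1 + ⋯ + 1/c_m) - m`, and it
is attained at `t = (a_1 - 1, …, a_m - 1)`.  Here `L t` is the common length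
of all maximal rewrite sequences from `t`. -/
theorem ohara_max_steps {m : ℕ} [NeZero m] (i : Fin m → ℝ) (A B : Fin m → ℕ)
    (hi : ∀ j, 0 < i j) (hA : ∀ j, 0 < A j) (hB : ∀ j, 0 < B j)
    (hiab : ∀ j, i j * (A j : ℝ) = i (j + 1) * (B (j + 1) : ℝ))
    (L : (Fin m → ℝ) → ℕ)
    (hL : ∀ t, InBox (fun j => (A j : ℝ)) t →
      ∀ (s : ℕ → Fin m → ℝ) (k : ℕ), s 0 = t →
      (∀ l < k, CStep m (fun j => (A j : ℝ)) (fun j => (B j : ℝ))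
        (s l) (s (l + 1))) →
      (∀ j, s k j < (B j : ℝ)) → L t = k) :
    (∀ t, InBox (fun j => (A j : ℝ)) t →
      (L t : ℝ) ≤ ((Finset.univ.lcm (cProd m A B) : ℕ) : ℝ) *
        (∑ j, ((cProd m A B j : ℝ))⁻¹) - m) ∧
    InBox (fun j => (A j : ℝ)) (fun j => (A j : ℝ) - 1) ∧
    (L (fun j => (A j : ℝ) - 1) : ℝ) =
      ((Finset.univ.lcm (cProd m A B) : ℕ) : ℝ) *
        (∑ j, ((cProd m A B j : ℝ))⁻¹) - m := by
  have hprod : ∏ j, A j = ∏ j, B j := by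
    exact_mod_cast prod_eq_prod_of_mul_eq_mul_succ (a := fun j => (A j : ℝ))
      (b := fun j => (B j : ℝ)) (fun j => (hi j).ne') hiab
  have hbox : InBox (fun j => (A j : ℝ)) (fun j => (A j : ℝ) - 1) := fun j =>
    ⟨sub_nonneg.mpr (Nat.one_le_cast.mpr (hA j)), sub_one_lt _⟩
  have hrun : ∀ t, InBox (fun j => (A j : ℝ)) t → ∃ n : Fin m → ℕ,
      (∀ j, n j < OHara.maxCount A B j) ∧ (∀ j, OHara.state A B t n j < B j) ∧
        L t = ∑ j, n j := by
    intro t ht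
    obtain ⟨n, hlt, hnormal, s, hs0, hs, hsend⟩ := OHara.exists_maximal_run hA hB hprod ht
    exact ⟨n, hlt, hnormal, hL t ht s _ hs0 hs (hsend ▸ hnormal)⟩
  have hsum : ∀ n : Fin m → ℕ, ∑ j, (n j + 1) = ∑ j, n j + m := fun n => by
    simp [Finset.sum_add_distrib]
  rw [OHara.lcm_mul_sum_inv_cProd A B hA hB]
  refine ⟨fun t ht => ?_, hbox, ?_⟩
  · obtain ⟨n, hlt, -, hLt⟩ := hrun t ht
    rw [hLt, le_sub_iff_add_le]
    exact_mod_cast (hsum n ▸ Finset.sum_le_sum fun j _ => hlt j :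
      ∑ j, n j + m ≤ ∑ j, OHara.maxCount A B j)
  · obtain ⟨n, hlt, hnormal, hLt⟩ := hrun _ hbox
    have hmax : ∀ j, n j + 1 = OHara.maxCount A B j := fun j =>
      le_antisymm (hlt j) (OHara.maxCount_le_succ_of_normal hA hB hprod hnormal j)
    rw [hLt, eq_sub_iff_add_eq]
    exact_mod_cast (hsum n ▸ Finset.sum_congr rfl fun j _ => hmax j :
      ∑ j, n j + m = ∑ j, OHara.maxCount A B j)
end

section
/- If a_1⋯a_m = b_1⋯b_m (the boxes P and Q have equal volume), then P and Q are approximately Π-congruent: there exist a nonzero linear functional π on ℝ^m, a countable family (P_i) of pairwise disjoint half-open boxes whose union is P, and vectors v_i ∈ ℝ^m with π(v_i) = 0 for all i, such that the translates P_i + v_i are pairwise disjoint and their union is Q. -/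
open scoped BigOperators

/-- The half-open box `[u_1, w_1) × ⋯ × [u_m, w_m)` in `ℝ^m`. -/
def HBox {m : ℕ} (u w : Fin m → ℝ) : Set (Fin m → ℝ) :=
  {x | ∀ j, u j ≤ x j ∧ x j < w j}

/-!
Cutting the largest possible square off the rectangle `[0, A) × [0, 1)` over and over (the
subtractive Euclidean algorithm) partitions it into countably many half-open squares, because the
sides of the squares are summable. Reflected in the diagonal, the same squares partition
`[0, 1) × [0, A)`, and the reflection of a square is its translate along `(1, -1)`. Rescaling the
coordinates, two boxes whose sides differ only in coordinates `i` and `k`, with the same product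
there, are equidecomposable by translations along a single vector of the `(i, k)`-plane. Common
refinement makes this equidecomposability transitive, so `m - 1` such moves on consecutive
coordinates carry `P` to `Q`. The `m - 1` directions span a proper subspace of `ℝ^m`, which lies
in the kernel of a nonzero linear functional `π`.
-/

open Set Function

def IsPartitionOf {α ι : Type*} (f : ι → Set α) (X : Set α) : Prop :=
  Pairwise (Disjoint on f) ∧ ⋃ i, f i = X

namespace IsPartitionOf

variable {α β ι κ : Type*} {f : ι → Set α} {X : Set α}

lemma subset (h : IsPartitionOf f X) (i : ι) : f i ⊆ X :=
  h.2 ▸ subset_iUnion f i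

lemma preimage {f : ι → Set β} {Y : Set β} (h : IsPartitionOf f Y) (φ : α → β) :
    IsPartitionOf (fun i => φ ⁻¹' f i) (φ ⁻¹' Y) :=
  ⟨fun _ _ hij => (h.1 hij).preimage φ, by rw [← h.2, preimage_iUnion]⟩

lemma image (h : IsPartitionOf f X) {φ : α → β} (hφ : Injective φ) :
    IsPartitionOf (fun i => φ '' f i) (φ '' X) :=
  ⟨fun _ _ hij => (disjoint_image_iff hφ).2 (h.1 hij), by rw [← h.2, image_iUnion]⟩

lemma inter_left (h : IsPartitionOf f X) (A : Set α) :
    IsPartitionOf (fun i => A ∩ f i) (A ∩ X) :=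
  ⟨fun _ _ hij => (h.1 hij).mono inter_subset_right inter_subset_right,
    by rw [← inter_iUnion, h.2]⟩

lemma comp_equiv {ι' : Type*} (h : IsPartitionOf f X) (e : ι' ≃ ι) :
    IsPartitionOf (f ∘ e) X :=
  ⟨h.1.comp_of_injective e.injective, by rw [← h.2]; exact e.surjective.iUnion_comp f⟩

lemma prod {A : ι → Set α} {C : ι → κ → Set α} (hA : IsPartitionOf A X)
    (hC : ∀ i, IsPartitionOf (C i) (A i)) : IsPartitionOf (fun p : ι × κ => C p.1 p.2) X := by
  refine ⟨fun p q hpq => ?_, by simp_rw [iUnion_prod', (hC _).2, hA.2]⟩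
  by_cases h₁ : p.1 = q.1
  · have h₂ : p.2 ≠ q.2 := fun h₂ => hpq (Prod.ext h₁ h₂)
    simpa only [onFun, h₁] using (hC q.1).1 h₂
  · exact (hA.1 h₁).mono ((hC p.1).subset p.2) ((hC q.1).subset q.2)

end IsPartitionOf

lemma isPartitionOf_ite {α ι : Type*} [DecidableEq ι] (X : Set α) (i : ι) :
    IsPartitionOf (fun j => if j = i then X else ∅) X := by
  refine ⟨fun j j' hjj' => ?_, by simp [iUnion_ite]⟩
  by_cases hj : j = i
  · simp [onFun, hj, Ne.symm (hj ▸ hjj')]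
  · simp [onFun, hj]

lemma isPartitionOf_sdiff_succ {α : Type*} {R : ℕ → Set α} (hR : Antitone R)
    (h : ⋂ n, R n = ∅) : IsPartitionOf (fun n => R n \ R (n + 1)) (R 0) := by
  refine ⟨(pairwise_disjoint_on _).2 fun n n' hnn' => ?_, ?_⟩
  · exact disjoint_sdiff_self_left.mono_right (sdiff_subset.trans (hR hnn'))
  · refine Subset.antisymm (iUnion_subset fun n => sdiff_subset.trans (hR n.zero_le))
      fun x hx => ?_
    by_contra hx'
    simp only [mem_iUnion, mem_sdiff, not_exists, not_and, not_not] at hx'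
    have : ∀ n, x ∈ R n := fun n => Nat.rec hx (fun n ih => hx' n ih) n
    simpa [h] using mem_iInter.2 this

section Boxes

variable {m : ℕ}

lemma HBox_self [NeZero m] (u : Fin m → ℝ) : HBox u u = ∅ :=
  eq_empty_iff_forall_notMem.2 fun _ hx => ((hx 0).1.trans_lt (hx 0).2).false

lemma HBox_inter_HBox (u w u' w' : Fin m → ℝ) :
    HBox u w ∩ HBox u' w' = HBox (u ⊔ u') (w ⊓ w') := by
  ext x
  simp only [HBox, mem_inter_iff, mem_ofPred_eq, Pi.sup_apply, Pi.inf_apply, sup_le_iff,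
    lt_inf_iff]
  exact ⟨fun h j => ⟨⟨(h.1 j).1, (h.2 j).1⟩, (h.1 j).2, (h.2 j).2⟩,
    fun h => ⟨fun j => ⟨(h j).1.1, (h j).2.1⟩, fun j => ⟨(h j).1.2, (h j).2.2⟩⟩⟩

lemma preimage_add_HBox (u w v : Fin m → ℝ) :
    (· + v) ⁻¹' HBox u w = HBox (u - v) (w - v) := by
  ext x
  simp only [HBox, mem_preimage, mem_ofPred_eq, Pi.add_apply, Pi.sub_apply, sub_le_iff_le_add,
    lt_sub_iff_add_lt]

lemma image_mul_HBox {s : Fin m → ℝ} (hs : ∀ j, 0 < s j) (u w : Fin m → ℝ) :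
    (s * ·) '' HBox u w = HBox (s * u) (s * w) := by
  rw [image_eq_preimage_of_inverse (f := (s * ·)) (g := (s⁻¹ * ·))
    (fun x => funext fun j => inv_mul_cancel_left₀ (hs j).ne' (x j))
    (fun x => funext fun j => mul_inv_cancel_left₀ (hs j).ne' (x j))]
  ext x
  simp only [HBox, mem_preimage, mem_ofPred_eq, Pi.mul_apply, Pi.inv_apply,
    le_inv_mul_iff₀ (hs _), inv_mul_lt_iff₀ (hs _)]

-- With `V = ker π` this is approximate `Π`-congruence.
def BoxEquidecomp (V : Submodule ℝ (Fin m → ℝ)) (P Q : Set (Fin m → ℝ)) : Prop :=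
  ∃ u w v : ℕ → Fin m → ℝ,
    IsPartitionOf (fun n => HBox (u n) (w n)) P ∧ (∀ n, v n ∈ V) ∧
    IsPartitionOf (fun n => (· + v n) '' HBox (u n) (w n)) Q

namespace BoxEquidecomp

variable {V W : Submodule ℝ (Fin m → ℝ)} {P Q R : Set (Fin m → ℝ)}

lemma refl [NeZero m] (V : Submodule ℝ (Fin m → ℝ)) (u w : Fin m → ℝ) :
    BoxEquidecomp V (HBox u w) (HBox u w) := by
  have hpieces : (fun n : ℕ => HBox u (if n = 0 then w else u)) =
      fun n => if n = 0 then HBox u w else ∅ := by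
    funext n
    split_ifs <;> simp [HBox_self]
  refine ⟨fun _ => u, fun n => if n = 0 then w else u, 0, ?_, fun _ => V.zero_mem, ?_⟩ <;>
    simpa [hpieces] using isPartitionOf_ite (HBox u w) 0

lemma mono (hVW : V ≤ W) (h : BoxEquidecomp V P Q) : BoxEquidecomp W P Q :=
  let ⟨u, w, v, hP, hv, hQ⟩ := h
  ⟨u, w, v, hP, fun n => hVW (hv n), hQ⟩

lemma trans (h₁ : BoxEquidecomp V P Q) (h₂ : BoxEquidecomp V Q R) : BoxEquidecomp V P R := by
  obtain ⟨u, w, v, hP, hv, hQ⟩ := h₁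
  obtain ⟨u', w', v', hQ', hv', hR⟩ := h₂
  -- the piece `(s, t)` is the part of the `s`-th piece of `P` that the first decomposition
  -- moves into the `t`-th piece of `Q`
  have hpiece : ∀ s t, HBox (u s ⊔ (u' t - v s)) (w s ⊓ (w' t - v s)) =
      HBox (u s) (w s) ∩ (· + v s) ⁻¹' HBox (u' t) (w' t) := fun s t => by
    rw [preimage_add_HBox, HBox_inter_HBox]
  have himage : ∀ s t,
      (· + (v s + v' t)) '' (HBox (u s) (w s) ∩ (· + v s) ⁻¹' HBox (u' t) (w' t)) =
        (· + v' t) '' (HBox (u' t) (w' t) ∩ (· + v s) '' HBox (u s) (w s)) := fun s t => by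
    rw [show (· + (v s + v' t)) = (· + v' t) ∘ (· + v s) from
      funext fun x => (add_assoc ..).symm, image_comp, image_inter_preimage, inter_comm]
  have hsrc : ∀ s, IsPartitionOf
      (fun t => HBox (u s) (w s) ∩ (· + v s) ⁻¹' HBox (u' t) (w' t)) (HBox (u s) (w s)) :=
    fun s => by
      have hsub : HBox (u s) (w s) ⊆ (· + v s) ⁻¹' Q := image_subset_iff.1 (hQ.subset s)
      simpa only [inter_eq_left.2 hsub] using
        (hQ'.preimage (· + v s)).inter_left (HBox (u s) (w s))
  have htgt : ∀ t, IsPartitionOf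
      (fun s => (· + v' t) '' (HBox (u' t) (w' t) ∩ (· + v s) '' HBox (u s) (w s)))
      ((· + v' t) '' HBox (u' t) (w' t)) := fun t => by
    refine IsPartitionOf.image ?_ (add_left_injective _)
    simpa only [inter_eq_left.2 (hQ'.subset t)] using hQ.inter_left (HBox (u' t) (w' t))
  let e : ℕ ≃ ℕ × ℕ := Nat.pairEquiv.symm
  refine ⟨fun n => u (e n).1 ⊔ (u' (e n).2 - v (e n).1),
    fun n => w (e n).1 ⊓ (w' (e n).2 - v (e n).1), fun n => v (e n).1 + v' (e n).2, ?_,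
    fun n => V.add_mem (hv _) (hv' _), ?_⟩
  · simp only [hpiece]
    exact (hP.prod hsrc).comp_equiv e
  · simp only [hpiece, himage]
    exact ((hR.prod htgt).comp_equiv (Equiv.prodComm ℕ ℕ)).comp_equiv e

lemma image_mul {s : Fin m → ℝ} (hs : ∀ j, 0 < s j) (h : BoxEquidecomp V P Q) :
    BoxEquidecomp (V.map (LinearMap.mulLeft ℝ s)) ((s * ·) '' P) ((s * ·) '' Q) := by
  obtain ⟨u, w, v, hP, hv, hQ⟩ := h
  have hinj : Injective (s * ·) := fun x y hxy =>
    funext fun j => mul_left_cancel₀ (hs j).ne' (congrFun hxy j)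
  refine ⟨fun n => s * u n, fun n => s * w n, fun n => s * v n, ?_,
    fun n => Submodule.mem_map_of_mem (hv n), ?_⟩
  · simpa only [image_mul_HBox hs] using hP.image hinj
  · have : ∀ n, (· + s * v n) '' HBox (s * u n) (s * w n) =
        (s * ·) '' ((· + v n) '' HBox (u n) (w n)) := fun n => by
      simp only [← image_mul_HBox hs, image_image, mul_add]
    simpa only [this] using hQ.image hinj

end BoxEquidecomp

end Boxes

section Squares

variable {c d : ℝ}

/-- The rectangle `[p.1, c) × [p.2, d)` loses the square of side `min (c - p.1) (d - p.2)` at its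
corner `p`; `cutSquare c d p` is the corner of the rectangle that remains. -/
noncomputable def cutSquare (c d : ℝ) (p : ℝ × ℝ) : ℝ × ℝ :=
  if d - p.2 ≤ c - p.1 then (p.1 + (d - p.2), p.2) else (p.1, p.2 + (c - p.1))

lemma cutSquare_le {p : ℝ × ℝ} (hp : p ≤ (c, d)) : cutSquare c d p ≤ (c, d) := by
  obtain ⟨h₁, h₂⟩ := hp
  unfold cutSquare
  split_ifs with h
  · exact ⟨by simp only at h ⊢; linarith, h₂⟩
  · exact ⟨h₁, by simp only at h ⊢; linarith⟩

lemma le_cutSquare {p : ℝ × ℝ} (hp : p ≤ (c, d)) : p ≤ cutSquare c d p := by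
  obtain ⟨h₁, h₂⟩ := hp
  unfold cutSquare
  split_ifs
  · exact ⟨by simp only at h₂ ⊢; linarith, le_rfl⟩
  · exact ⟨le_rfl, by simp only at h₁ ⊢; linarith⟩

lemma sub_cutSquare_add_sub_cutSquare (p : ℝ × ℝ) :
    (c - (cutSquare c d p).1) + (d - (cutSquare c d p).2) =
      (c - p.1) + (d - p.2) - min (c - p.1) (d - p.2) := by
  unfold cutSquare
  split_ifs with h
  · rw [min_eq_right h]; ring
  · rw [min_eq_left (not_le.1 h).le]; ring

lemma Ico_prod_Ico_sdiff_cutSquare {p : ℝ × ℝ} (hp : p ≤ (c, d)) :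
    Ico p.1 c ×ˢ Ico p.2 d \ Ico (cutSquare c d p).1 c ×ˢ Ico (cutSquare c d p).2 d =
      Ico p.1 (p.1 + min (c - p.1) (d - p.2)) ×ˢ Ico p.2 (p.2 + min (c - p.1) (d - p.2)) := by
  obtain ⟨x, y⟩ := p
  obtain ⟨hx, hy⟩ : x ≤ c ∧ y ≤ d := hp
  unfold cutSquare
  ext ⟨a, b⟩
  simp only [mem_sdiff, mem_prod, mem_Ico]
  split_ifs with h
  · rw [min_eq_right h]; grind
  · rw [min_eq_left (not_le.1 h).le]; grind

open Filter Topology in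
theorem exists_isPartitionOf_squares (hc : 0 ≤ c) (hd : 0 ≤ d) :
    ∃ x y e : ℕ → ℝ, IsPartitionOf (fun n => Ico (x n) (x n + e n) ×ˢ Ico (y n) (y n + e n))
      (Ico 0 c ×ˢ Ico 0 d) := by
  set p : ℕ → ℝ × ℝ := fun n => (cutSquare c d)^[n] 0
  have hp_succ : ∀ n, p (n + 1) = cutSquare c d (p n) := fun n => iterate_succ_apply' _ _ _
  have hp : ∀ n, p n ≤ (c, d) := fun n =>
    Nat.rec ⟨hc, hd⟩ (fun n ih => hp_succ n ▸ cutSquare_le ih) n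
  set e : ℕ → ℝ := fun n => min (c - (p n).1) (d - (p n).2)
  have he_nonneg : ∀ n, 0 ≤ e n := fun n =>
    le_min (sub_nonneg.2 (hp n).1) (sub_nonneg.2 (hp n).2)
  -- each cut lowers the half-perimeter of the remaining rectangle by the side of the square
  have hsum : ∀ N, ∑ n ∈ Finset.range N, e n + ((c - (p N).1) + (d - (p N).2)) = c + d := by
    intro N
    induction N with
    | zero => simp [p]
    | succ N ih => rw [Finset.sum_range_succ, hp_succ, sub_cutSquare_add_sub_cutSquare]; linarith
  have he : Tendsto e atTop (𝓝 0) := by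
    refine (summable_of_sum_range_le (c := c + d) he_nonneg fun N => ?_).tendsto_atTop_zero
    linarith [hsum N, sub_nonneg.2 (hp N).1, sub_nonneg.2 (hp N).2]
  set R : ℕ → Set (ℝ × ℝ) := fun n => Ico (p n).1 c ×ˢ Ico (p n).2 d
  have hR : Antitone R := antitone_nat_of_succ_le fun n => by
    have := le_cutSquare (hp n)
    rw [← hp_succ] at this
    exact prod_mono (Ico_subset_Ico_left this.1) (Ico_subset_Ico_left this.2)
  have hR' : ⋂ n, R n = ∅ := by
    refine eq_empty_iff_forall_notMem.2 fun z hz => ?_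
    simp only [R, mem_iInter, mem_prod, mem_Ico] at hz
    obtain ⟨n, hn⟩ := (he.eventually (gt_mem_nhds (lt_min (sub_pos.2 (hz 0).1.2)
      (sub_pos.2 (hz 0).2.2)))).exists
    exact hn.not_ge (min_le_min (by linarith [(hz n).1.1]) (by linarith [(hz n).2.1]))
  refine ⟨fun n => (p n).1, fun n => (p n).2, e, ?_⟩
  simpa [R, hp_succ, Ico_prod_Ico_sdiff_cutSquare (hp _), p] using
    isPartitionOf_sdiff_succ hR hR'

end Squares

section TwoCoordinates

variable {m : ℕ} {i k : Fin m}

def unitSlab (i k : Fin m) (S : Set (ℝ × ℝ)) : Set (Fin m → ℝ) :=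
  {x | ∀ j, j ≠ i → j ≠ k → x j ∈ Ico 0 1} ∩ (fun x => (x i, x k)) ⁻¹' S

lemma IsPartitionOf.unitSlab {ι : Type*} {f : ι → Set (ℝ × ℝ)} {S : Set (ℝ × ℝ)}
    (h : IsPartitionOf f S) (i k : Fin m) :
    IsPartitionOf (fun n => unitSlab i k (f n)) (unitSlab i k S) :=
  (h.preimage _).inter_left _

lemma unitSlab_Ico_prod_Ico (hik : i ≠ k) (x₀ x₁ y₀ y₁ : ℝ) :
    unitSlab i k (Ico x₀ x₁ ×ˢ Ico y₀ y₁) =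
      HBox (update (update 0 i x₀) k y₀) (update (update 1 i x₁) k y₁) := by
  ext x
  simp only [unitSlab, HBox, mem_inter_iff, mem_ofPred_eq, mem_preimage, mem_prod, mem_Ico]
  constructor
  · rintro ⟨hx, hi, hk⟩ j
    by_cases hjk : j = k
    · subst hjk; simpa using hk
    by_cases hji : j = i
    · subst hji; simpa [hjk] using hi
    · simpa [hji, hjk] using hx j hji hjk
  · intro hx
    exact ⟨fun j hji hjk => by simpa [hji, hjk] using hx j, by simpa [hik] using hx i,
      by simpa using hx k⟩

lemma HBox_zero_update_one_eq_unitSlab (hik : i ≠ k) (A : ℝ) :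
    HBox 0 (update 1 i A) = unitSlab i k (Ico 0 A ×ˢ Ico 0 1) := by
  rw [unitSlab_Ico_prod_Ico hik]
  congr 1
  · simp
  · exact (update_eq_self_iff.2 (update_of_ne hik.symm (β := fun _ => ℝ) A 1).symm).symm

lemma image_add_unitSlab_square (hik : i ≠ k) (x y e : ℝ) :
    (· + (y - x) • (Pi.single i 1 - Pi.single k 1)) ''
        unitSlab i k (Ico x (x + e) ×ˢ Ico y (y + e)) =
      unitSlab k i (Ico x (x + e) ×ˢ Ico y (y + e)) := by
  rw [image_add_right]
  ext z
  simp only [unitSlab, mem_inter_iff, mem_ofPred_eq, mem_preimage, mem_prod, mem_Ico, ne_eq,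
    Pi.add_apply, Pi.neg_apply, Pi.smul_apply, Pi.sub_apply, Pi.single_apply, smul_eq_mul,
    le_add_neg_iff_add_le, add_neg_lt_iff_lt_add, hik, hik.symm, ↓reduceIte, sub_zero,
    zero_sub, zero_add, mul_one, mul_neg, neg_sub]
  constructor
  · rintro ⟨h₁, ⟨h₂, h₃⟩, h₄, h₅⟩
    exact ⟨fun j hjk hji => by simpa [hji, hjk] using h₁ j hji hjk,
      ⟨by linarith, by linarith⟩, by linarith, by linarith⟩
  · rintro ⟨h₁, ⟨h₂, h₃⟩, h₄, h₅⟩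
    exact ⟨fun j hji hjk => by simpa [hji, hjk] using h₁ j hjk hji,
      ⟨by linarith, by linarith⟩, by linarith, by linarith⟩

theorem boxEquidecomp_update_one (hik : i ≠ k) {A : ℝ} (hA : 0 < A) :
    BoxEquidecomp (ℝ ∙ (Pi.single i 1 - Pi.single k 1)) (HBox 0 (update 1 i A))
      (HBox 0 (update 1 k A)) := by
  obtain ⟨x, y, e, hsq⟩ := exists_isPartitionOf_squares hA.le zero_le_one
  refine ⟨fun n => update (update 0 i (x n)) k (y n),
    fun n => update (update 1 i (x n + e n)) k (y n + e n),
    fun n => (y n - x n) • (Pi.single i 1 - Pi.single k 1), ?_,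
    fun n => Submodule.smul_mem _ _ (Submodule.mem_span_singleton_self _), ?_⟩
  · simp only [← unitSlab_Ico_prod_Ico hik, HBox_zero_update_one_eq_unitSlab hik]
    exact hsq.unitSlab i k
  · simp only [← unitSlab_Ico_prod_Ico hik, image_add_unitSlab_square hik,
      HBox_zero_update_one_eq_unitSlab hik.symm]
    exact hsq.unitSlab k i

theorem boxEquidecomp_update_update (hik : i ≠ k) {g : Fin m → ℝ} (hg : ∀ j, 0 < g j)
    {x : ℝ} (hx : 0 < x) :
    BoxEquidecomp (ℝ ∙ (Pi.single i x - Pi.single k (g k))) (HBox 0 g)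
      (HBox 0 (update (update g i x) k (g k * (g i / x)))) := by
  have hs : ∀ j, 0 < update g i x j := fun j => by
    rw [update_apply]; split_ifs; exacts [hx, hg j]
  have hmul : ∀ (s : Fin m → ℝ) j (t : ℝ),
      s * update (1 : Fin m → ℝ) j t = update s j (s j * t) := fun s j t => by
    ext j'
    by_cases h : j' = j <;> simp [h]
  have h := (boxEquidecomp_update_one hik (div_pos (hg i) hx)).image_mul hs
  rwa [image_mul_HBox hs, image_mul_HBox hs, mul_zero, hmul, hmul, Submodule.map_span,
    image_singleton, LinearMap.mulLeft_apply, mul_sub, ← Pi.single_mul_right,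
    ← Pi.single_mul_right, mul_one, mul_one, update_self, update_of_ne hik.symm, update_idem,
    mul_div_cancel₀ _ hx.ne', update_eq_self] at h

end TwoCoordinates

lemma Fintype.prod_update_update {ι M : Type*} [Fintype ι] [DecidableEq ι] [CommMonoid M]
    {i k : ι} (hik : i ≠ k) (g : ι → M) {x y : M} (h : x * y = g i * g k) :
    ∏ j, update (update g i x) k y j = ∏ j, g j := by
  have key : ∀ x y, ∏ j, update (update g i x) k y j =
      y * (x * ∏ j ∈ (Finset.univ \ {k}) \ {i}, g j) := fun x y => by
    rw [Finset.prod_update_of_mem (Finset.mem_univ k),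
      Finset.prod_update_of_mem (by simpa using hik)]
  calc ∏ j, update (update g i x) k y j = (x * y) * ∏ j ∈ (Finset.univ \ {k}) \ {i}, g j := by
        rw [key, mul_left_comm, mul_assoc]
    _ = ∏ j, g j := by
        rw [h, ← mul_comm (g k), mul_assoc, ← key, update_eq_self, update_eq_self]

lemma Fintype.eq_of_prod_eq_of_forall_ne {ι M : Type*} [Fintype ι] [DecidableEq ι]
    [CommGroupWithZero M] {g b : ι → M} (hb : ∀ j, b j ≠ 0) {i : ι}
    (h : ∀ j, j ≠ i → g j = b j) (hprod : ∏ j, g j = ∏ j, b j) : g = b := by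
  have hg : g = update b i (g i) := by
    ext j
    by_cases hj : j = i
    · subst hj; simp
    · simp [hj, h j hj]
  rw [hg, Finset.prod_update_of_mem (Finset.mem_univ i),
    Finset.prod_eq_mul_prod_sdiff_singleton_of_mem (Finset.mem_univ i)] at hprod
  rw [hg, mul_right_cancel₀ (Finset.prod_ne_zero_iff.2 fun j _ => hb j) hprod, update_eq_self]

theorem boxEquidecomp_of_prod_eq {n : ℕ} {a b : Fin (n + 1) → ℝ} (ha : ∀ j, 0 < a j)
    (hb : ∀ j, 0 < b j) (hab : ∏ j, a j = ∏ j, b j) {V : Submodule ℝ (Fin (n + 1) → ℝ)}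
    (hV : ∀ i : Fin n, Pi.single i.castSucc (b i.castSucc) - Pi.single i.succ (a i.succ) ∈ V) :
    BoxEquidecomp V (HBox 0 a) (HBox 0 b) := by
  suffices ∀ j : Fin (n + 1), ∃ g : Fin (n + 1) → ℝ,
      (∀ i, 0 < g i) ∧ ∏ i, g i = ∏ i, b i ∧ (∀ i < j, g i = b i) ∧ (∀ i, j < i → g i = a i) ∧
        BoxEquidecomp V (HBox 0 a) (HBox 0 g) by
    obtain ⟨g, -, hprod, hlt, -, hequi⟩ := this (Fin.last n)
    rwa [Fintype.eq_of_prod_eq_of_forall_ne (fun j => (hb j).ne')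
      (fun i hi => hlt i (Fin.lt_last_iff_ne_last.2 hi)) hprod] at hequi
  intro j
  induction j using Fin.induction with
  | zero =>
    exact ⟨a, ha, hab, fun i hi => absurd hi (Fin.not_lt_zero i), fun _ _ => rfl, .refl V 0 a⟩
  | succ i ih =>
    obtain ⟨g, hg, hprod, hlt, hgt, hequi⟩ := ih
    have hne : i.castSucc ≠ i.succ := i.castSucc_lt_succ.ne
    have hb₀ := hb i.castSucc
    refine ⟨update (update g i.castSucc (b i.castSucc)) i.succ
      (g i.succ * (g i.castSucc / b i.castSucc)), fun j => ?_, ?_, fun j hj => ?_,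
      fun j hj => ?_, ?_⟩
    · rw [update_apply, update_apply]
      split_ifs
      exacts [mul_pos (hg _) (div_pos (hg _) hb₀), hb₀, hg j]
    · rw [Fintype.prod_update_update hne _ (by field_simp), hprod]
    · rw [update_of_ne hj.ne]
      rcases (Fin.le_castSucc_iff.2 hj).lt_or_eq with hj' | rfl
      · rw [update_of_ne hj'.ne, hlt j hj']
      · rw [update_self]
    · have hj' : i.castSucc < j := i.castSucc_lt_succ.trans hj
      rw [update_of_ne hj.ne', update_of_ne hj'.ne', hgt j hj']
    · refine hequi.trans ((boxEquidecomp_update_update hne hg hb₀).mono ?_)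
      rw [Submodule.span_singleton_le_iff_mem, hgt _ i.castSucc_lt_succ]
      exact hV i

lemma exists_ne_zero_forall_apply_eq_zero_of_card_lt_finrank {K E ι : Type*} [DivisionRing K]
    [AddCommGroup E] [Module K E] [Fintype ι] (v : ι → E)
    (h : Fintype.card ι < Module.finrank K E) :
    ∃ f : E →ₗ[K] K, f ≠ 0 ∧ ∀ i, f (v i) = 0 := by
  obtain ⟨f, hf, hle⟩ := Submodule.exists_le_ker_of_lt_top _
    (Submodule.lt_top_of_finrank_lt_finrank ((finrank_range_le_card (R := K) v).trans_lt h))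
  exact ⟨f, hf, fun i => hle (Submodule.subset_span (mem_range_self i))⟩

/-- two half-open boxes `P = [0,a_1)×⋯×[0,a_m)` and
`Q = [0,b_1)×⋯×[0,b_m)` of equal volume are approximately `Π`-congruent:
for some nonzero linear functional `π`, `P` can be cut into countably many
pairwise disjoint half-open boxes which, translated by vectors in
`ker π`, are pairwise disjoint with union `Q`. -/
theorem boxes_approx_Pi_congruent (m : ℕ) (hm : 1 ≤ m) (a b : Fin m → ℝ)
    (ha : ∀ j, 0 < a j) (hb : ∀ j, 0 < b j)
    (hvol : ∏ j, a j = ∏ j, b j) :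
    ∃ pi : (Fin m → ℝ) →ₗ[ℝ] ℝ, pi ≠ 0 ∧
    ∃ u w v : ℕ → Fin m → ℝ,
      (∀ k k' : ℕ, k ≠ k' →
        Disjoint (HBox (u k) (w k)) (HBox (u k') (w k'))) ∧
      (⋃ k, HBox (u k) (w k)) = HBox 0 a ∧
      (∀ k, pi (v k) = 0) ∧
      (∀ k k' : ℕ, k ≠ k' →
        Disjoint ((fun x => x + v k) '' HBox (u k) (w k))
          ((fun x => x + v k') '' HBox (u k') (w k'))) ∧
      (⋃ k, (fun x => x + v k) '' HBox (u k) (w k)) = HBox 0 b := by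
  obtain ⟨n, rfl⟩ : ∃ n, m = n + 1 := ⟨m - 1, by omega⟩
  obtain ⟨π, hπ, hker⟩ := exists_ne_zero_forall_apply_eq_zero_of_card_lt_finrank (K := ℝ)
    (fun i : Fin n =>
      (Pi.single i.castSucc (b i.castSucc) - Pi.single i.succ (a i.succ) : Fin (n + 1) → ℝ))
    (by simp)
  obtain ⟨u, w, v, ⟨hPd, hP⟩, hv, ⟨hQd, hQ⟩⟩ :=
    boxEquidecomp_of_prod_eq ha hb hvol (V := LinearMap.ker π) hker
  exact ⟨π, hπ, u, w, v, fun k k' h => hPd h, hP, hv, fun k k' h => hQd h, hQ⟩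
end

section
/- Suppose P and Q are relatively rational and have equal volume (a_1⋯a_m = b_1⋯b_m). Then P and Q are Π-congruent: there exist a nonzero linear functional π on ℝ^m, finitely many pairwise disjoint half-open boxes P_1, …, P_N whose union is P, and vectors v_1, …, v_N ∈ ℝ^m with π(v_i) = 0 for all i, such that the translates P_1 + v_1, …, P_N + v_N are pairwise disjoint and their union is Q. -/
/-!
Multiply by `|λ|` so that the sides become integers, `Z_j` for `P` and `Y_j` for `Q`, with
`∏ Z = ∏ Y`. The numbers `n_j = Z_0 ⋯ Z_j Y_{j+1} ⋯ Y_{m-1}` satisfy `Z_j n_{j-1} = Y_j n_j`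
cyclically, so with the mesh `s_j = a_j / n_j` the box `P` is an `(n_0, …, n_{m-1})` grid and `Q`
an `(n_{m-1}, n_0, …, n_{m-2})` grid of the same cells. Moving the cell `(c_j)_j` of `P` to the
cell `(c_{j-1})_j` of `Q` is a translation whose value under `π x = ∑ x_j / s_j` is
`∑ c_{j-1} - ∑ c_j = 0`.
-/

open Function

section Grid

variable {m : ℕ}

theorem HBox_image_add_const (u w v : Fin m → ℝ) :
    (· + v) '' HBox u w = HBox (u + v) (w + v) := by
  ext x
  refine ⟨?_, fun hx => ⟨x - v, fun j => ?_, sub_add_cancel x v⟩⟩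
  · rintro ⟨y, hy, rfl⟩ j
    exact ⟨add_le_add_left (hy j).1 _, add_lt_add_left (hy j).2 _⟩
  · exact ⟨le_sub_iff_add_le.2 (hx j).1, sub_lt_iff_lt_add.2 (hx j).2⟩

def gridCell (s : Fin m → ℝ) (c : Fin m → ℤ) : Set (Fin m → ℝ) :=
  HBox (fun j => c j * s j) (fun j => (c j + 1) * s j)

variable {s : Fin m → ℝ}

theorem mem_gridCell_iff (hs : ∀ j, 0 < s j) {c : Fin m → ℤ} {x : Fin m → ℝ} :
    x ∈ gridCell s c ↔ ∀ j, ⌊x j / s j⌋ = c j := by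
  simp only [gridCell, HBox, Set.mem_ofPred_eq, Int.floor_eq_iff, le_div_iff₀ (hs _),
    div_lt_iff₀ (hs _)]

theorem pairwise_disjoint_gridCell (hs : ∀ j, 0 < s j) : Pairwise (Disjoint on gridCell s) :=
  fun _ _ hcd => Set.disjoint_left.2 fun _ hc hd => hcd <| funext fun j =>
    ((mem_gridCell_iff hs).1 hc j).symm.trans ((mem_gridCell_iff hs).1 hd j)

theorem pairwise_disjoint_gridCell_fin (hs : ∀ j, 0 < s j) (n : Fin m → ℕ) :
    Pairwise (Disjoint on fun c : (∀ j, Fin (n j)) => gridCell s fun j => c j) :=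
  (pairwise_disjoint_gridCell hs).comp_of_injective fun _ _ h =>
    funext fun j => Fin.ext (by simpa using congrFun h j)

theorem iUnion_gridCell (hs : ∀ j, 0 < s j) (n : Fin m → ℕ) :
    ⋃ c : (∀ j, Fin (n j)), gridCell s (fun j => c j) = HBox 0 fun j => n j * s j := by
  ext x
  have hbox : x ∈ HBox 0 (fun j => n j * s j) ↔ ∀ j, 0 ≤ ⌊x j / s j⌋ ∧ ⌊x j / s j⌋ < n j := by
    simp only [HBox, Set.mem_ofPred_eq, Pi.zero_apply, Int.floor_nonneg, Int.floor_lt,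
      Int.cast_natCast, le_div_iff₀ (hs _), div_lt_iff₀ (hs _), zero_mul]
  simp only [hbox, Set.mem_iUnion, mem_gridCell_iff hs]
  refine ⟨fun ⟨c, hc⟩ j => by rw [hc j]; omega, fun h => ?_⟩
  exact ⟨fun j => ⟨⌊x j / s j⌋.toNat, by have := h j; omega⟩, fun j => by simp [(h j).1]⟩

theorem image_add_gridCell (c d : Fin m → ℤ) :
    (· + fun j => ((d j : ℝ) - c j) * s j) '' gridCell s c = gridCell s d := by
  rw [gridCell, HBox_image_add_const, gridCell]
  congr 1 <;> funext j <;> simp only [Pi.add_apply] <;> ring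

noncomputable def gridFunctional (s : Fin m → ℝ) : (Fin m → ℝ) →ₗ[ℝ] ℝ :=
  ∑ j, (s j)⁻¹ • LinearMap.proj j

theorem gridFunctional_apply (x : Fin m → ℝ) : gridFunctional s x = ∑ j, x j / s j := by
  simp [gridFunctional, div_eq_inv_mul]

theorem gridFunctional_ne_zero [NeZero m] (hs : ∀ j, s j ≠ 0) : gridFunctional s ≠ 0 := by
  intro h
  have : gridFunctional s s = m := by simp [gridFunctional_apply, div_self (hs _)]
  simp [h, eq_comm, NeZero.ne m] at this

def PiCongruent (pi : (Fin m → ℝ) →ₗ[ℝ] ℝ) (P Q : Set (Fin m → ℝ)) : Prop :=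
  ∃ (N : ℕ) (u w v : Fin N → Fin m → ℝ),
    (∀ k k' : Fin N, k ≠ k' → Disjoint (HBox (u k) (w k)) (HBox (u k') (w k'))) ∧
    (⋃ k, HBox (u k) (w k)) = P ∧
    (∀ k, pi (v k) = 0) ∧
    (∀ k k' : Fin N, k ≠ k' →
      Disjoint ((fun x => x + v k) '' HBox (u k) (w k))
        ((fun x => x + v k') '' HBox (u k') (w k'))) ∧
    (⋃ k, (fun x => x + v k) '' HBox (u k) (w k)) = Q

theorem PiCongruent.of_fintype {pi : (Fin m → ℝ) →ₗ[ℝ] ℝ} {P Q : Set (Fin m → ℝ)}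
    {ι : Type*} [Fintype ι] (u w v : ι → Fin m → ℝ) (T : ι → Set (Fin m → ℝ))
    (hP : Pairwise (Disjoint on fun k => HBox (u k) (w k))) (hPU : ⋃ k, HBox (u k) (w k) = P)
    (hv : ∀ k, pi (v k) = 0) (hT : ∀ k, (· + v k) '' HBox (u k) (w k) = T k)
    (hQ : Pairwise (Disjoint on T)) (hQU : ⋃ k, T k = Q) :
    PiCongruent pi P Q := by
  set e := (Fintype.equivFin ι).symm
  obtain rfl : T = fun k => (· + v k) '' HBox (u k) (w k) := (funext hT).symm
  exact ⟨_, u ∘ e, w ∘ e, v ∘ e, fun _ _ h => hP (e.injective.ne h),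
    (e.surjective.iUnion_comp (fun k => HBox (u k) (w k))).trans hPU, fun _ => hv _,
    fun _ _ h => hQ (e.injective.ne h),
    (e.surjective.iUnion_comp (fun k => (· + v k) '' HBox (u k) (w k))).trans hQU⟩

theorem piCongruent_grid_perm (hs : ∀ j, 0 < s j) (n : Fin m → ℕ)
    (ρ : Equiv.Perm (Fin m)) :
    PiCongruent (gridFunctional s) (HBox 0 fun j => n j * s j)
      (HBox 0 fun j => n (ρ j) * s j) := by
  set e : (∀ j, Fin (n j)) ≃ ∀ j, Fin (n (ρ j)) := (Equiv.piCongrLeft (fun j => Fin (n j)) ρ).symm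
  refine PiCongruent.of_fintype (fun (c : ∀ j, Fin (n j)) j => (c j : ℤ) * s j)
    (fun c j => ((c j : ℤ) + 1) * s j) (fun c j => ((c (ρ j) : ℤ) - (c j : ℤ) : ℝ) * s j)
    (fun c => gridCell s fun j => e c j) (pairwise_disjoint_gridCell_fin hs n)
    (iUnion_gridCell hs n) (fun c => ?_) (fun c => image_add_gridCell _ _)
    ((pairwise_disjoint_gridCell_fin hs _).comp_of_injective e.injective)
    ((e.surjective.iUnion_comp _).trans (iUnion_gridCell hs _))
  simp only [gridFunctional_apply, mul_div_cancel_right₀ _ (hs _).ne', Finset.sum_sub_distrib]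
  exact sub_eq_zero.2 (Equiv.sum_comp ρ fun j => ((c j : ℤ) : ℝ))

end Grid

theorem Fin.mul_prod_ite_le_sub_one {M : Type*} [CommMonoid M] {m : ℕ} {f g : Fin (m + 1) → M}
    (h : ∏ i, f i = ∏ i, g i) (j : Fin (m + 1)) :
    f j * ∏ i, (if i ≤ j - 1 then f i else g i) = g j * ∏ i, (if i ≤ j then f i else g i) := by
  induction j using Fin.cases with
  | zero =>
    have hlast : (0 : Fin (m + 1)) - 1 = Fin.last m := by simp [Fin.ext_iff]
    have hall : ∏ i, (if i ≤ Fin.last m then f i else g i) = ∏ i, g i := by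
      simp only [Fin.le_last, if_true, h]
    rw [hlast, hall, Fin.prod_univ_succ g,
      Fin.prod_univ_succ (fun i => if i ≤ (0 : Fin (m + 1)) then f i else g i)]
    simp only [le_rfl, if_true, Fin.le_zero_iff, Fin.succ_ne_zero, if_false]
    exact mul_left_comm _ _ _
  | succ k =>
    have hpred : k.succ - 1 = k.castSucc := by simp [Fin.ext_iff, Fin.coe_sub_one]
    rw [hpred, Fin.prod_univ_succAbove _ k.succ, Fin.prod_univ_succAbove _ k.succ,
      if_neg (by simp [Fin.le_castSucc_iff]), if_pos le_rfl, mul_left_comm]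
    congr 2
    refine Finset.prod_congr rfl fun i _ => if_congr ?_ rfl rfl
    rw [Fin.le_castSucc_iff, le_iff_lt_or_eq, or_iff_left (Fin.succAbove_ne _ _)]

theorem exists_natCast_eq_abs_mul {ι : Type*} {lam : ℝ} {a : ι → ℝ} (ha : ∀ j, 0 ≤ a j)
    (hz : ∀ j, ∃ z : ℤ, lam * a j = z) : ∃ Z : ι → ℕ, ∀ j, (Z j : ℝ) = |lam| * a j := by
  choose z hz using hz
  exact ⟨fun j => (z j).natAbs, fun j => by
    rw [Nat.cast_natAbs, Int.cast_abs, ← hz, abs_mul, abs_of_nonneg (ha j)]⟩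

theorem exists_common_grid {m : ℕ} {a b : Fin (m + 1) → ℝ} (ha : ∀ j, 0 < a j)
    (hb : ∀ j, 0 < b j) {lam : ℝ} (hlam : lam ≠ 0) (hza : ∀ j, ∃ z : ℤ, lam * a j = z)
    (hzb : ∀ j, ∃ z : ℤ, lam * b j = z) (hvol : ∏ j, a j = ∏ j, b j) :
    ∃ (s : Fin (m + 1) → ℝ) (n : Fin (m + 1) → ℕ), (∀ j, 0 < s j) ∧
      (∀ j, a j = n j * s j) ∧ ∀ j, b j = n (j - 1) * s j := by
  have hμ : 0 < |lam| := abs_pos.2 hlam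
  obtain ⟨Z, hZ⟩ := exists_natCast_eq_abs_mul (fun j => (ha j).le) hza
  obtain ⟨Y, hY⟩ := exists_natCast_eq_abs_mul (fun j => (hb j).le) hzb
  have hZpos : ∀ j, 0 < Z j := fun j => Nat.cast_pos.1 (hZ j ▸ mul_pos hμ (ha j))
  have hYpos : ∀ j, 0 < Y j := fun j => Nat.cast_pos.1 (hY j ▸ mul_pos hμ (hb j))
  have hZY : ∏ j, Z j = ∏ j, Y j := by
    have : ((∏ j, Z j : ℕ) : ℝ) = ∏ j, (Y j : ℝ) := by
      push_cast
      simp only [hZ, hY, Finset.prod_mul_distrib, hvol]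
    exact_mod_cast this
  set n : Fin (m + 1) → ℕ := fun j => ∏ i, if i ≤ j then Z i else Y i
  have hn : ∀ j, (0 : ℝ) < n j := fun j => Nat.cast_pos.2 <|
    Finset.prod_pos fun i _ => by split_ifs; exacts [hZpos i, hYpos i]
  refine ⟨fun j => a j / n j, n, fun j => div_pos (ha j) (hn j),
    fun j => (mul_div_cancel₀ _ (hn j).ne').symm, fun j => ?_⟩
  have key : |lam| * a j * n (j - 1) = |lam| * b j * n j := by
    rw [← hZ, ← hY]
    exact_mod_cast Fin.mul_prod_ite_le_sub_one hZY j
  rw [mul_div_assoc', eq_div_iff (hn j).ne']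
  exact mul_left_cancel₀ hμ.ne' (by linear_combination -key)

/-- two relatively rational half-open boxes
`P = [0,a_1)×⋯×[0,a_m)` and `Q = [0,b_1)×⋯×[0,b_m)` of equal volume are
`Π`-congruent: for some nonzero linear functional `π`, `P` can be cut into
finitely many pairwise disjoint half-open boxes which, translated by
vectors in `ker π`, are pairwise disjoint with union `Q`. -/
theorem boxes_Pi_congruent (m : ℕ) (hm : 1 ≤ m) (a b : Fin m → ℝ)
    (ha : ∀ j, 0 < a j) (hb : ∀ j, 0 < b j)
    (hrat : ∃ lam : ℝ, lam ≠ 0 ∧ (∀ j, ∃ z : ℤ, lam * a j = (z : ℝ)) ∧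
      (∀ j, ∃ z : ℤ, lam * b j = (z : ℝ)))
    (hvol : ∏ j, a j = ∏ j, b j) :
    ∃ pi : (Fin m → ℝ) →ₗ[ℝ] ℝ, pi ≠ 0 ∧
    ∃ (N : ℕ) (u w v : Fin N → Fin m → ℝ),
      (∀ k k' : Fin N, k ≠ k' →
        Disjoint (HBox (u k) (w k)) (HBox (u k') (w k'))) ∧
      (⋃ k, HBox (u k) (w k)) = HBox 0 a ∧
      (∀ k, pi (v k) = 0) ∧
      (∀ k k' : Fin N, k ≠ k' →
        Disjoint ((fun x => x + v k) '' HBox (u k) (w k))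
          ((fun x => x + v k') '' HBox (u k') (w k'))) ∧
      (⋃ k, (fun x => x + v k) '' HBox (u k) (w k)) = HBox 0 b := by
  obtain ⟨m, rfl⟩ : ∃ m', m = m' + 1 := ⟨m - 1, by omega⟩
  obtain ⟨lam, hlam, hza, hzb⟩ := hrat
  obtain ⟨s, n, hs, has, hbs⟩ := exists_common_grid ha hb hlam hza hzb hvol
  have hP : HBox 0 a = HBox 0 fun j => n j * s j := congrArg _ (funext has)
  have hQ : HBox 0 b = HBox 0 fun j => n (Equiv.subRight 1 j) * s j := congrArg _ (funext hbs)
  rw [hP, hQ]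
  exact ⟨gridFunctional s, gridFunctional_ne_zero fun j => (hs j).ne', piCongruent_grid_perm hs n _⟩
end
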